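/- arXiv:2308.01991 — 4 statements merged into one kernel-verified Lean document; each statement's English description precedes it below -/
import Mathlib

section
/- Let r ≥ 2 and m ≥ 1 be integers. There exists a constant C̃ = C̃(r,m) such that the following holds: for all linearly independent real polynomials p_1, …, p_r of degree at most m and all a < b satisfying ∫_a^b |p_1| ≥ max_{1≤l≤r} ∫_a^b |p_l| and, for every 2 ≤ k ≤ r−1, inf_{c_1,…,c_{k−1}∈ℝ} ∫_a^b |p_k − Σ_{i=1}^{k−1} c_i p_i| ≥ max_{k+1≤l≤r} inf_{c_1,…,c_{k−1}∈ℝ} ∫_a^b |p_l − Σ_{i=1}^{k−1} c_i p_i|, one has |⟨p̃_i, p_l⟩/⟨p̃_i, p̃_i⟩| ≤ C̃ for every 1 ≤ i < l ≤ r, where p̃_1, …, p̃_r are obtained from p_1, …, p_r by the Gram–Schmidt process in L²(a,b). In particular, there exist constants C̃₁ = C̃₁(m) and C̃₂ = C̃₂(r,m) such that for every 1 ≤ k < l ≤ r, with A := [−C̃₂, C̃₂], (1/C̃₁)·inf_{c_i∈A} ∫_a^b |p_l − Σ_{i=1}^{k} c_i p_i| ≤ inf_{c_i∈ℝ} ∫_a^b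 |p_l − Σ_{i=1}^{k} c_i p_i| ≤ C̃₁·inf_{c_i∈A} ∫_a^b |p_l − Σ_{i=1}^{k} c_i p_i|. -/
open MeasureTheory Set

noncomputable section

/-- The normalized `L²(a,b)` inner product of two real polynomials. -/
def polyInner (a b : ℝ) (p q : Polynomial ℝ) : ℝ :=
  (b - a)⁻¹ * ∫ x in a..b, p.eval x * q.eval x

lemma pos_int {a b : ℝ} (hab : a < b) {f : ℝ → ℝ} (hc : Continuous f)
    (h0 : ∀ x, 0 ≤ f x) (hfin : {x | f x = 0}.Finite) :
    0 < ∫ x in a..b, f x := by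
  rw [intervalIntegral.integral_of_le hab.le]
  have hsupp : IsOpen (Function.support f) := isOpen_ne.preimage hc
  have hint : IntegrableOn f (Ioc a b) volume := hc.integrableOn_Ioc
  rw [MeasureTheory.integral_pos_iff_support_of_nonneg_ae
    (Filter.Eventually.of_forall h0) hint]
  rw [Measure.restrict_apply hsupp.measurableSet]
  have hsub : Ioc a b ⊆ (Function.support f ∩ Ioc a b) ∪ {x | f x = 0} := by
    intro x hx
    by_cases h : f x = 0
    · exact Or.inr h
    · exact Or.inl ⟨h, hx⟩
  have hle : volume (Ioc a b) ≤ volume (Function.support f ∩ Ioc a b) + volume {x | f x = 0} :=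
    (measure_mono hsub).trans (measure_union_le _ _)
  rw [hfin.measure_zero, add_zero] at hle
  have : (0:ENNReal) < volume (Ioc a b) := by
    rw [Real.volume_Ioc]
    simp [ENNReal.ofReal_pos, sub_pos.2 hab]
  exact lt_of_lt_of_le this hle

lemma integral_abs_poly_pos {a b : ℝ} (hab : a < b) {f : Polynomial ℝ} (hf : f ≠ 0) :
    0 < ∫ x in a..b, |f.eval x| := by
  apply pos_int hab (continuous_abs.comp f.continuous_aeval) (fun x => abs_nonneg _)
  have : {x : ℝ | |f.eval x| = 0} = {x | f.IsRoot x} := by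
    ext x; simp [Polynomial.IsRoot, abs_eq_zero]
  rw [Function.comp_def]
  simpa [this] using Polynomial.finite_setOf_isRoot hf

lemma integral_sq_poly_pos {a b : ℝ} (hab : a < b) {f : Polynomial ℝ} (hf : f ≠ 0) :
    0 < ∫ x in a..b, (f.eval x)^2 := by
  apply pos_int hab ((f.continuous_aeval.pow 2 : Continuous fun x => (f.eval x)^2)) (fun x => sq_nonneg _)
  have : {x : ℝ | (f.eval x)^2 = 0} = {x | f.IsRoot x} := by
    ext x; simp [Polynomial.IsRoot, pow_eq_zero_iff]
  simpa [this] using Polynomial.finite_setOf_isRoot hf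

lemma cs_integral {a b : ℝ} (hab : a ≤ b) {f g : ℝ → ℝ} (hf : Continuous f) (hg : Continuous g) :
    (∫ x in a..b, f x * g x)^2 ≤ (∫ x in a..b, (f x)^2) * (∫ x in a..b, (g x)^2) := by
  set A := ∫ x in a..b, (g x)^2 with hA
  set B := ∫ x in a..b, f x * g x with hB
  set C := ∫ x in a..b, (f x)^2 with hC
  have key : ∀ t : ℝ, 0 ≤ A * (t*t) + (2*B) * t + C := by
    intro t
    have h0 : (0:ℝ) ≤ ∫ x in a..b, (f x + t * g x)^2 :=
      intervalIntegral.integral_nonneg hab (fun x _ => sq_nonneg _)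
    have h1 : ∫ x in a..b, (f x + t * g x)^2
        = t^2 * A + (2*t) * B + C := by
      have e : ∀ x ∈ Set.uIcc a b, (fun x => (f x + t * g x)^2) x
          = (fun x => t^2 * (g x)^2 + (2*t) * (f x * g x) + (f x)^2) x := by
        intro x _; ring
      rw [intervalIntegral.integral_congr e]
      have i1 : IntervalIntegrable (fun x => t^2 * (g x)^2) volume a b :=
        (continuous_const.mul (hg.pow 2)).intervalIntegrable _ _
      have i2 : IntervalIntegrable (fun x => (2*t) * (f x * g x)) volume a b :=
        (continuous_const.mul (hf.mul hg)).intervalIntegrable _ _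
      have i3 : IntervalIntegrable (fun x => (f x)^2) volume a b :=
        (hf.pow 2).intervalIntegrable _ _
      rw [intervalIntegral.integral_add (i1.add i2) i3, intervalIntegral.integral_add i1 i2,
        intervalIntegral.integral_const_mul, intervalIntegral.integral_const_mul]
    nlinarith [h1 ▸ h0]
  have hd := discrim_le_zero key
  rw [discrim] at hd
  nlinarith

namespace NormEquiv

variable (m : ℕ)

def Pv (v : Fin (m+1) → ℝ) : Polynomial ℝ := ∑ i, Polynomial.C (v i) * Polynomial.X ^ (i:ℕ)

lemma Pv_eval (v : Fin (m+1) → ℝ) (x : ℝ) : (Pv m v).eval x = ∑ i, v i * x ^ (i:ℕ) := by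
  rw [Pv, Polynomial.eval_finset_sum]
  simp

lemma Pv_coeff (v : Fin (m+1) → ℝ) (i : Fin (m+1)) : (Pv m v).coeff i = v i := by
  rw [Pv, Polynomial.finset_sum_coeff]
  rw [Finset.sum_eq_single i]
  · simp
  · intro j _ hj
    simp only [Polynomial.coeff_C_mul, Polynomial.coeff_X_pow]
    rw [if_neg (fun h : (i:ℕ) = (j:ℕ) => hj (Fin.ext h.symm))]
    simp
  · simp

lemma Pv_ne_zero {v : Fin (m+1) → ℝ} (hv : v ≠ 0) : Pv m v ≠ 0 := by
  intro h
  apply hv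
  funext i
  have := Pv_coeff m v i
  rw [h] at this
  simpa using this.symm

lemma Pv_natDegree_le (v : Fin (m+1) → ℝ) : (Pv m v).natDegree ≤ m := by
  apply Polynomial.natDegree_sum_le_of_forall_le
  intro i _
  apply le_trans (Polynomial.natDegree_C_mul_le _ _)
  simpa using Nat.lt_succ_iff.mp i.isLt

lemma Pv_of_poly (f : Polynomial ℝ) (hf : f.natDegree ≤ m) :
    Pv m (fun i => f.coeff (i:ℕ)) = f := by
  apply Polynomial.ext
  intro n
  by_cases hn : n ≤ m
  · have := Pv_coeff m (fun i => f.coeff (i:ℕ)) ⟨n, by omega⟩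
    simpa using this
  · rw [Polynomial.coeff_eq_zero_of_natDegree_lt (lt_of_le_of_lt (Pv_natDegree_le m _) (by omega)),
      Polynomial.coeff_eq_zero_of_natDegree_lt (by omega)]

def N1 (v : Fin (m+1) → ℝ) : ℝ := ∫ x in (0:ℝ)..1, |(Pv m v).eval x|

def N2sq (v : Fin (m+1) → ℝ) : ℝ := ∫ x in (0:ℝ)..1, ((Pv m v).eval x)^2

lemma int_abs_sub_one_side {f g : ℝ → ℝ} (hf : Continuous f) (hg : Continuous g) :
    (∫ x in (0:ℝ)..1, |f x|) - ∫ x in (0:ℝ)..1, |g x| ≤ ∫ x in (0:ℝ)..1, |f x - g x| := by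
  have h : (∫ x in (0:ℝ)..1, |f x|) ≤ ∫ x in (0:ℝ)..1, (|f x - g x| + |g x|) := by
    apply intervalIntegral.integral_mono_on (by norm_num)
      (hf.abs.intervalIntegrable _ _)
      (((hf.sub hg).abs.add hg.abs).intervalIntegrable _ _)
    intro x _
    calc |f x| = |(f x - g x) + g x| := by ring_nf
    _ ≤ |f x - g x| + |g x| := abs_add_le _ _
  rw [intervalIntegral.integral_add (f := fun x => |f x - g x|) ((hf.sub hg).abs.intervalIntegrable _ _)
    (hg.abs.intervalIntegrable _ _)] at h
  linarith

lemma N1_lip (v w : Fin (m+1) → ℝ) : |N1 m v - N1 m w| ≤ ∑ i, |v i - w i| := by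
  have hbound : (∫ x in (0:ℝ)..1, |(Pv m v).eval x - (Pv m w).eval x|) ≤ ∑ i, |v i - w i| := by
    have : (∫ x in (0:ℝ)..1, (∑ i, |v i - w i| : ℝ)) = ∑ i, |v i - w i| := by simp
    rw [← this]
    apply intervalIntegral.integral_mono_on (by norm_num)
      (((Pv m v).continuous.sub (Pv m w).continuous).abs.intervalIntegrable _ _)
      (intervalIntegrable_const)
    intro x hx
    show |(Pv m v).eval x - (Pv m w).eval x| ≤ _
    rw [Pv_eval, Pv_eval, ← Finset.sum_sub_distrib]
    refine le_trans (Finset.abs_sum_le_sum_abs _ _) (Finset.sum_le_sum fun i _ => ?_)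
    rw [← sub_mul, abs_mul]
    have hx1 : |x ^ (i:ℕ)| ≤ 1 := by
      rw [abs_pow]
      exact pow_le_one₀ (abs_nonneg x) (abs_le.2 ⟨by linarith [hx.1], hx.2⟩)
    nlinarith [abs_nonneg (v i - w i), abs_nonneg x]
  rw [abs_sub_le_iff]
  constructor
  · exact le_trans (int_abs_sub_one_side (Pv m v).continuous (Pv m w).continuous) hbound
  · refine le_trans (int_abs_sub_one_side (Pv m w).continuous (Pv m v).continuous) ?_
    simpa [abs_sub_comm] using hbound

lemma N1_continuous : Continuous (N1 m) := by
  rw [Metric.continuous_iff]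
  intro v ε hε
  refine ⟨ε / (m+2), by positivity, fun w hw => ?_⟩
  rw [Real.dist_eq]
  calc |N1 m w - N1 m v| ≤ ∑ i, |w i - v i| := N1_lip m w v
  _ ≤ ∑ _i : Fin (m+1), dist w v := Finset.sum_le_sum fun i _ => by
      rw [← Real.dist_eq]; exact dist_le_pi_dist w v i
  _ = (m+1) * dist w v := by
      rw [Finset.sum_const, Finset.card_univ, Fintype.card_fin, nsmul_eq_mul]
      push_cast; ring
  _ < ε := by
      have h1 : (0:ℝ) < m + 2 := by positivity
      have : ((m:ℝ)+1) * dist w v < (m+2) * (ε/(m+2)) := by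
        apply mul_lt_mul' (by linarith) hw dist_nonneg h1
      calc ((m:ℝ)+1) * dist w v < (m+2) * (ε/(m+2)) := this
      _ = ε := by field_simp

lemma N2sq_eq (v : Fin (m+1) → ℝ) :
    N2sq m v = ∑ i : Fin (m+1), ∑ j : Fin (m+1), v i * v j * (1 / ((i:ℕ)+(j:ℕ)+1)) := by
  have e : ∀ x ∈ Set.uIcc (0:ℝ) 1, (fun x => ((Pv m v).eval x)^2) x
      = (fun x => ∑ i : Fin (m+1), ∑ j : Fin (m+1), (v i * v j) * x ^ ((i:ℕ)+(j:ℕ))) x := by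
    intro x _
    dsimp only
    rw [Pv_eval, sq, Finset.sum_mul_sum]
    congr 1; ext i; congr 1; ext j; ring
  rw [N2sq, intervalIntegral.integral_congr e, intervalIntegral.integral_finset_sum]
  · refine Finset.sum_congr rfl fun i _ => ?_
    rw [intervalIntegral.integral_finset_sum]
    · refine Finset.sum_congr rfl fun j _ => ?_
      rw [intervalIntegral.integral_const_mul, integral_pow]
      push_cast
      field_simp
      simp
    · intro j _
      exact (continuous_const.mul (continuous_pow _)).intervalIntegrable _ _
  · intro i _
    apply Continuous.intervalIntegrable
    exact continuous_finset_sum _ fun j _ => continuous_const.mul (continuous_pow _)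

lemma N2sq_continuous : Continuous (N2sq m) := by
  have : (N2sq m) = fun v : Fin (m+1) → ℝ => ∑ i : Fin (m+1), ∑ j : Fin (m+1), v i * v j * ((1:ℝ) / ((i:ℕ)+(j:ℕ)+1)) := by
    funext v; exact N2sq_eq m v
  rw [this]
  exact continuous_finset_sum _ fun i _ => continuous_finset_sum _ fun j _ =>
    (((continuous_apply i).mul (continuous_apply j)).mul continuous_const)


lemma Pv_smul (t : ℝ) (v : Fin (m+1) → ℝ) : Pv m (t • v) = Polynomial.C t * Pv m v := by
  rw [Pv, Pv, Finset.mul_sum]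
  refine Finset.sum_congr rfl fun i _ => ?_
  simp [mul_assoc, Polynomial.C_mul]

lemma N1_smul (t : ℝ) (v : Fin (m+1) → ℝ) : N1 m (t • v) = |t| * N1 m v := by
  rw [N1, N1, ← intervalIntegral.integral_const_mul]
  refine intervalIntegral.integral_congr fun x _ => ?_
  rw [Pv_smul]
  simp [abs_mul]

lemma N2sq_smul (t : ℝ) (v : Fin (m+1) → ℝ) : N2sq m (t • v) = t^2 * N2sq m v := by
  rw [N2sq, N2sq, ← intervalIntegral.integral_const_mul]
  refine intervalIntegral.integral_congr fun x _ => ?_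
  rw [Pv_smul]
  simp [mul_pow]

lemma N1_pos {v : Fin (m+1) → ℝ} (hv : v ≠ 0) : 0 < N1 m v :=
  integral_abs_poly_pos (by norm_num) (Pv_ne_zero m hv)

lemma base_bound : ∃ C : ℝ, 1 ≤ C ∧ ∀ f : Polynomial ℝ, f.natDegree ≤ m →
    (∫ x in (0:ℝ)..1, (f.eval x)^2) ≤ C * (∫ x in (0:ℝ)..1, |f.eval x|)^2 := by
  obtain ⟨v₀, hv₀S, hv₀min⟩ := (isCompact_sphere (0 : Fin (m+1) → ℝ) 1).exists_isMinOn
    (NormedSpace.sphere_nonempty.2 zero_le_one) ((N1_continuous m).continuousOn)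
  obtain ⟨w₀, hw₀S, hw₀max⟩ := (isCompact_sphere (0 : Fin (m+1) → ℝ) 1).exists_isMaxOn
    (NormedSpace.sphere_nonempty.2 zero_le_one) ((N2sq_continuous m).continuousOn)
  have hv₀ne : v₀ ≠ 0 := by
    intro h
    rw [mem_sphere_zero_iff_norm, h, norm_zero] at hv₀S
    norm_num at hv₀S
  set c := N1 m v₀ with hc
  have hcpos : 0 < c := N1_pos m hv₀ne
  set M := N2sq m w₀ with hM
  have key : ∀ v : Fin (m+1) → ℝ, N2sq m v ≤ (M / c^2) * (N1 m v)^2 := by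
    intro v
    by_cases hv : v = 0
    · subst hv
      have h1 : Pv m (0 : Fin (m+1) → ℝ) = 0 := by
        rw [Pv]; refine Finset.sum_eq_zero fun i _ => by simp
      have h2 : N2sq m (0 : Fin (m+1) → ℝ) = 0 := by rw [N2sq, h1]; simp
      have h3 : N1 m (0 : Fin (m+1) → ℝ) = 0 := by rw [N1, h1]; simp
      rw [h2, h3]; simp
    · set t := ‖v‖ with ht
      have htpos : 0 < t := norm_pos_iff.2 hv
      set w := t⁻¹ • v with hw
      have hwS : w ∈ Metric.sphere (0 : Fin (m+1) → ℝ) 1 := by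
        rw [mem_sphere_zero_iff_norm, hw, norm_smul, Real.norm_eq_abs, abs_inv,
          abs_of_pos htpos]
        exact inv_mul_cancel₀ htpos.ne'
      have hv_eq : v = t • w := by
        rw [hw, smul_smul, mul_inv_cancel₀ htpos.ne', one_smul]
      have h1 : N1 m v = t * N1 m w := by
        rw [hv_eq, N1_smul, abs_of_pos htpos]
      have h2 : N2sq m v = t^2 * N2sq m w := by
        rw [hv_eq, N2sq_smul]
      have hcw : c ≤ N1 m w := hv₀min hwS
      have hMw : N2sq m w ≤ M := hw₀max hwS
      rw [h1, h2]
      rw [div_mul_eq_mul_div, le_div_iff₀ (by positivity)]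
      have hN1w : 0 < N1 m w := N1_pos m (fun h => by
        rw [h] at hwS
        rw [mem_sphere_zero_iff_norm, norm_zero] at hwS
        norm_num at hwS)
      have hnn : 0 ≤ N2sq m w := intervalIntegral.integral_nonneg (by norm_num) (fun x _ => sq_nonneg _)
      have hc2 : c^2 ≤ (N1 m w)^2 := by nlinarith
      have hfin : N2sq m w * c^2 ≤ M * (N1 m w)^2 := by nlinarith
      nlinarith [sq_nonneg t, hfin]
  refine ⟨max 1 (M / c^2), le_max_left _ _, fun f hf => ?_⟩
  set v : Fin (m+1) → ℝ := fun i => f.coeff (i:ℕ) with hv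
  have hPv : Pv m v = f := Pv_of_poly m f hf
  have h1 : (∫ x in (0:ℝ)..1, (f.eval x)^2) = N2sq m v := by rw [N2sq, hPv]
  have h2 : (∫ x in (0:ℝ)..1, |f.eval x|) = N1 m v := by rw [N1, hPv]
  have h3 : 0 ≤ N1 m v := intervalIntegral.integral_nonneg (by norm_num) (fun x _ => abs_nonneg _)
  rw [h1, h2]
  calc N2sq m v ≤ (M / c^2) * (N1 m v)^2 := key v
  _ ≤ max 1 (M / c^2) * (N1 m v)^2 := by
      apply mul_le_mul_of_nonneg_right (le_max_right _ _) (sq_nonneg _)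

end NormEquiv

namespace PI

variable {a b : ℝ}

lemma pint (p q : Polynomial ℝ) :
    IntervalIntegrable (fun x => p.eval x * q.eval x) volume a b :=
  (p.continuous.mul q.continuous).intervalIntegrable _ _

lemma comm (p q : Polynomial ℝ) : polyInner a b p q = polyInner a b q p := by
  unfold polyInner
  congr 1
  exact intervalIntegral.integral_congr fun x _ => mul_comm _ _

lemma add_right (p q₁ q₂ : Polynomial ℝ) :
    polyInner a b p (q₁ + q₂) = polyInner a b p q₁ + polyInner a b p q₂ := by
  unfold polyInner
  rw [← mul_add, ← intervalIntegral.integral_add (pint p q₁) (pint p q₂)]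
  congr 1
  exact intervalIntegral.integral_congr fun x _ => by simp [mul_add]

lemma smul_right (c : ℝ) (p q : Polynomial ℝ) :
    polyInner a b p (c • q) = c * polyInner a b p q := by
  unfold polyInner
  have e : (∫ x in a..b, p.eval x * (c • q).eval x) = ∫ x in a..b, c * (p.eval x * q.eval x) :=
    intervalIntegral.integral_congr fun x _ => by
      show p.eval x * (c • q).eval x = c * (p.eval x * q.eval x)
      rw [Polynomial.eval_smul, smul_eq_mul]; ring
  rw [e, intervalIntegral.integral_const_mul]; ring

lemma sub_right (p q₁ q₂ : Polynomial ℝ) :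
    polyInner a b p (q₁ - q₂) = polyInner a b p q₁ - polyInner a b p q₂ := by
  have : q₁ - q₂ = q₁ + (-1 : ℝ) • q₂ := by ring_nf; simp [sub_eq_add_neg]
  rw [this, add_right, smul_right]; ring

lemma sum_right {ι : Type*} (s : Finset ι) (p : Polynomial ℝ) (f : ι → Polynomial ℝ) :
    polyInner a b p (∑ i ∈ s, f i) = ∑ i ∈ s, polyInner a b p (f i) := by
  induction s using Finset.cons_induction with
  | empty =>
    simp only [Finset.sum_empty]
    unfold polyInner
    simp
  | cons i s his ih =>
    rw [Finset.sum_cons, add_right, ih, Finset.sum_cons]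

lemma add_left (p₁ p₂ q : Polynomial ℝ) :
    polyInner a b (p₁ + p₂) q = polyInner a b p₁ q + polyInner a b p₂ q := by
  rw [comm, add_right, comm q p₁, comm q p₂]

lemma sub_left (p₁ p₂ q : Polynomial ℝ) :
    polyInner a b (p₁ - p₂) q = polyInner a b p₁ q - polyInner a b p₂ q := by
  rw [comm, sub_right, comm q p₁, comm q p₂]

lemma smul_left (c : ℝ) (p q : Polynomial ℝ) :
    polyInner a b (c • p) q = c * polyInner a b p q := by
  rw [comm, smul_right, comm]

lemma self_nonneg (hab : a < b) (p : Polynomial ℝ) : 0 ≤ polyInner a b p p := by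
  unfold polyInner
  apply mul_nonneg (inv_nonneg.2 (by linarith))
  apply intervalIntegral.integral_nonneg hab.le
  intro x _
  exact mul_self_nonneg _

lemma self_pos (hab : a < b) {p : Polynomial ℝ} (hp : p ≠ 0) : 0 < polyInner a b p p := by
  unfold polyInner
  apply mul_pos (inv_pos.2 (by linarith))
  have := integral_sq_poly_pos hab hp
  calc (0:ℝ) < ∫ x in a..b, (p.eval x)^2 := this
  _ = ∫ x in a..b, p.eval x * p.eval x := intervalIntegral.integral_congr fun x _ => sq (p.eval x) ▸ by ring

lemma cs (hab : a < b) (p q : Polynomial ℝ) :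
    (polyInner a b p q)^2 ≤ polyInner a b p p * polyInner a b q q := by
  unfold polyInner
  have h := cs_integral hab.le p.continuous q.continuous
  have e1 : (∫ x in a..b, (p.eval x)^2) = ∫ x in a..b, p.eval x * p.eval x :=
    intervalIntegral.integral_congr fun x _ => by ring
  have e2 : (∫ x in a..b, (q.eval x)^2) = ∫ x in a..b, q.eval x * q.eval x :=
    intervalIntegral.integral_congr fun x _ => by ring
  rw [e1, e2] at h
  have hba : (0:ℝ) < (b-a)⁻¹ := inv_pos.2 (by linarith)
  nlinarith [h, sq_nonneg ((b-a)⁻¹)]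

lemma n1_sq_le (hab : a < b) (f : Polynomial ℝ) :
    ((b-a)⁻¹ * ∫ x in a..b, |f.eval x|)^2 ≤ polyInner a b f f := by
  have h := cs_integral hab.le (f := fun x => |f.eval x|) (g := fun _ => (1:ℝ))
    f.continuous.abs continuous_const
  simp only [mul_one, one_pow] at h
  have e1 : (∫ x in a..b, |f.eval x|^2) = ∫ x in a..b, f.eval x * f.eval x :=
    intervalIntegral.integral_congr fun x _ => by rw [sq_abs]; ring
  have e2 : (∫ x in a..b, (1:ℝ)) = b - a := by simp
  rw [e1, e2] at h
  unfold polyInner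
  have hba : (0:ℝ) < b - a := sub_pos.2 hab
  rw [mul_pow]
  calc ((b-a)⁻¹)^2 * (∫ x in a..b, |f.eval x|)^2
      ≤ ((b-a)⁻¹)^2 * ((∫ x in a..b, f.eval x * f.eval x) * (b-a)) := by
        apply mul_le_mul_of_nonneg_left _ (sq_nonneg _)
        linarith [h]
  _ = (b-a)⁻¹ * ∫ x in a..b, f.eval x * f.eval x := by
        field_simp
  _ = polyInner a b f f := rfl

end PI

lemma norm_equiv_transfer (m : ℕ) : ∃ C : ℝ, 1 ≤ C ∧ ∀ f : Polynomial ℝ, f.natDegree ≤ m →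
    ∀ a b : ℝ, a < b →
    polyInner a b f f ≤ C * ((b-a)⁻¹ * ∫ x in a..b, |f.eval x|)^2 := by
  obtain ⟨C, hC1, hC⟩ := NormEquiv.base_bound m
  refine ⟨C, hC1, fun f hf a b hab => ?_⟩
  have hba : (0:ℝ) < b - a := sub_pos.2 hab
  set g : Polynomial ℝ := f.comp (Polynomial.C (b-a) * Polynomial.X + Polynomial.C a) with hg
  have hgdeg : g.natDegree ≤ m := by
    refine le_trans (Polynomial.natDegree_comp_le) ?_
    have h1 : (Polynomial.C (b-a) * Polynomial.X + Polynomial.C a).natDegree ≤ 1 := by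
      refine le_trans (Polynomial.natDegree_add_le _ _) ?_
      simp [Polynomial.natDegree_C_mul_le]
      exact le_trans (Polynomial.natDegree_mul_le) (by simp)
    calc f.natDegree * (Polynomial.C (b-a) * Polynomial.X + Polynomial.C a).natDegree
        ≤ f.natDegree * 1 := Nat.mul_le_mul_left _ h1
    _ ≤ m := by simpa using hf
  have hgeval : ∀ t : ℝ, g.eval t = f.eval ((b-a) * t + a) := by
    intro t
    rw [hg, Polynomial.eval_comp]
    simp
  have key2 : (∫ t in (0:ℝ)..1, (g.eval t)^2) = (b-a)⁻¹ * ∫ x in a..b, (f.eval x)^2 := by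
    have := intervalIntegral.integral_comp_mul_add (a := (0:ℝ)) (b := 1)
      (f := fun y => (f.eval y)^2) (c := b-a) (by linarith) a
    simp only [mul_zero, zero_add, mul_one] at this
    rw [show (b-a) + a = b by ring] at this
    rw [intervalIntegral.integral_congr (g := fun t => ((fun y => (f.eval y)^2) ((b-a)*t + a)))
      (fun t _ => by simp [hgeval t]), this, smul_eq_mul]
  have key1 : (∫ t in (0:ℝ)..1, |g.eval t|) = (b-a)⁻¹ * ∫ x in a..b, |f.eval x| := by
    have := intervalIntegral.integral_comp_mul_add (a := (0:ℝ)) (b := 1)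
      (f := fun y => |f.eval y|) (c := b-a) (by linarith) a
    simp only [mul_zero, zero_add, mul_one] at this
    rw [show (b-a) + a = b by ring] at this
    rw [intervalIntegral.integral_congr (g := fun t => ((fun y => |f.eval y|) ((b-a)*t + a)))
      (fun t _ => by simp [hgeval t]), this, smul_eq_mul]
  have hbase := hC g hgdeg
  rw [key1, key2] at hbase
  have efin : polyInner a b f f = (b-a)⁻¹ * ∫ x in a..b, (f.eval x)^2 := by
    unfold polyInner
    congr 1
    exact intervalIntegral.integral_congr fun x _ => by ring
  rw [efin]
  exact hbase

lemma sum_expand {r : ℕ} (K : ℕ) (w : Fin r → ℝ) (cc : Fin r → Fin r → ℝ)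
    (v : Fin r → Polynomial ℝ) :
    ∑ j ∈ Finset.univ.filter (fun j : Fin r => (j:ℕ) < K),
        w j • (v j - ∑ t ∈ Finset.univ.filter (fun t : Fin r => (t:ℕ) < (j:ℕ)), cc j t • v t)
    = ∑ t ∈ Finset.univ.filter (fun t : Fin r => (t:ℕ) < K),
        (w t - ∑ j ∈ Finset.univ.filter (fun j : Fin r => (t:ℕ) < (j:ℕ) ∧ (j:ℕ) < K),
          w j * cc j t) • v t := by
  have step1 : ∑ j ∈ Finset.univ.filter (fun j : Fin r => (j:ℕ) < K),
      w j • (v j - ∑ t ∈ Finset.univ.filter (fun t : Fin r => (t:ℕ) < (j:ℕ)), cc j t • v t)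
      = (∑ j ∈ Finset.univ.filter (fun j : Fin r => (j:ℕ) < K), w j • v j)
        - ∑ j ∈ Finset.univ.filter (fun j : Fin r => (j:ℕ) < K),
            ∑ t ∈ Finset.univ.filter (fun t : Fin r => (t:ℕ) < (j:ℕ)), (w j * cc j t) • v t := by
    rw [← Finset.sum_sub_distrib]
    refine Finset.sum_congr rfl fun j _ => ?_
    rw [smul_sub, Finset.smul_sum]
    congr 1
    exact Finset.sum_congr rfl fun t _ => smul_smul _ _ _
  have step2 : ∑ j ∈ Finset.univ.filter (fun j : Fin r => (j:ℕ) < K),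
      ∑ t ∈ Finset.univ.filter (fun t : Fin r => (t:ℕ) < (j:ℕ)), (w j * cc j t) • v t
      = ∑ t ∈ Finset.univ.filter (fun t : Fin r => (t:ℕ) < K),
          ∑ j ∈ Finset.univ.filter (fun j : Fin r => (t:ℕ) < (j:ℕ) ∧ (j:ℕ) < K),
            (w j * cc j t) • v t := by
    refine Finset.sum_comm' fun j t => ?_
    simp only [Finset.mem_filter, Finset.mem_univ, true_and]
    omega
  rw [step1, step2, ← Finset.sum_sub_distrib]
  refine Finset.sum_congr rfl fun t _ => ?_
  rw [sub_smul, Finset.sum_smul]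

def ffil (r K : ℕ) : Finset (Fin r) := Finset.univ.filter (fun i : Fin r => (i:ℕ) < K)

def gsd (a b : ℝ) (q p : Fin r → Polynomial ℝ) (k i : Fin r) : ℝ :=
  polyInner a b (q k) (p i) / polyInner a b (q k) (q k)

def gsB (Cq : ℝ) (r : ℕ) : ℕ → ℝ
  | 0 => 0
  | n+1 => Cq + r * Cq * gsB Cq r n

section Main

variable {r : ℕ} {a b : ℝ} {p q : Fin r → Polynomial ℝ}

lemma rep_exists
    (hq0 : ∀ i : Fin r, (i:ℕ) = 0 → q i = p i)
    (hq' : ∀ i : Fin r, 1 ≤ (i:ℕ) → q i = p i - ∑ k ∈ ffil r (i:ℕ), gsd a b q p k i • q k) :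
    ∀ i : Fin r, ∃ c : Fin r → ℝ, q i = p i - ∑ j ∈ ffil r (i:ℕ), c j • p j := by
  have key : ∀ n : ℕ, ∀ i : Fin r, (i:ℕ) ≤ n →
      ∃ c : Fin r → ℝ, q i = p i - ∑ j ∈ ffil r (i:ℕ), c j • p j := by
    intro n
    induction n with
    | zero =>
      intro i hi
      refine ⟨0, ?_⟩
      have h1 : (i:ℕ) = 0 := Nat.le_zero.mp hi
      have h2 : ffil r (i:ℕ) = ∅ := by
        rw [h1, ffil]
        exact Finset.filter_false_of_mem (fun x _ => by omega)
      rw [h2, hq0 i h1]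
      simp
    | succ n ih =>
      intro i hi
      rcases Nat.lt_succ_iff_lt_or_eq.mp (Nat.lt_succ_of_le hi) with h | h
      · exact ih i (by omega)
      · have hi1 : 1 ≤ (i:ℕ) := by omega
        have H : ∀ j : Fin r, ∃ c : Fin r → ℝ,
            ((j:ℕ) ≤ n → q j = p j - ∑ t ∈ ffil r (j:ℕ), c t • p t) := by
          intro j
          by_cases hj : (j:ℕ) ≤ n
          · exact (ih j hj).imp fun c hc => fun _ => hc
          · exact ⟨0, fun h' => absurd h' hj⟩
        choose cc hcc using H
        refine ⟨fun t => gsd a b q p t i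
          - ∑ j ∈ Finset.univ.filter (fun j : Fin r => (t:ℕ) < (j:ℕ) ∧ (j:ℕ) < (i:ℕ)),
            gsd a b q p j i * cc j t, ?_⟩
        rw [hq' i hi1]
        congr 1
        rw [show (ffil r (i:ℕ)) = Finset.univ.filter (fun j : Fin r => (j:ℕ) < (i:ℕ)) from rfl,
          ← sum_expand]
        refine Finset.sum_congr rfl fun j hj => ?_
        have hjn : (j:ℕ) ≤ n := by
          simp only [Finset.mem_filter] at hj
          omega
        rw [hcc j hjn]
        rfl
  exact fun i => key r i (by omega)

lemma q_ne_zero (hli : LinearIndependent ℝ p)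
    (hrep : ∀ i : Fin r, ∃ c : Fin r → ℝ, q i = p i - ∑ j ∈ ffil r (i:ℕ), c j • p j) :
    ∀ i : Fin r, q i ≠ 0 := by
  intro i hqi
  obtain ⟨c, hc⟩ := hrep i
  rw [hqi] at hc
  have hpi : p i = ∑ j ∈ ffil r (i:ℕ), c j • p j := by
    have := hc.symm
    rw [sub_eq_zero] at this
    exact this
  set G : Fin r → ℝ := fun j => if j = i then (1:ℝ) else if (j:ℕ) < (i:ℕ) then -(c j) else 0
    with hG
  have hsum : ∑ j : Fin r, G j • p j = 0 := by
    rw [← Finset.sum_filter_add_sum_filter_not Finset.univ (fun j : Fin r => (j:ℕ) < (i:ℕ))]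
    have e1 : ∑ j ∈ Finset.univ.filter (fun j : Fin r => (j:ℕ) < (i:ℕ)), G j • p j
        = -(∑ j ∈ ffil r (i:ℕ), c j • p j) := by
      rw [← Finset.sum_neg_distrib]
      refine Finset.sum_congr rfl fun j hj => ?_
      simp only [ffil, Finset.mem_filter, Finset.mem_univ, true_and] at hj
      have hji : j ≠ i := fun h => by rw [h] at hj; omega
      rw [hG]
      simp [hji, hj]
    have e2 : ∑ j ∈ Finset.univ.filter (fun j : Fin r => ¬ (j:ℕ) < (i:ℕ)), G j • p j = p i := by
      rw [Finset.sum_eq_single_of_mem i (by simp)]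
      · rw [hG]; simp
      · intro j hj hji
        simp only [ffil, Finset.mem_filter, Finset.mem_univ, true_and] at hj
        rw [hG]
        simp [hji, hj]
    rw [e1, e2, ← hpi]
    ring
  have := Fintype.linearIndependent_iff.mp hli G hsum i
  rw [hG] at this
  simp at this

lemma orth_q (hab : a < b)
    (hqne : ∀ i : Fin r, q i ≠ 0)
    (hq' : ∀ i : Fin r, 1 ≤ (i:ℕ) → q i = p i - ∑ k ∈ ffil r (i:ℕ), gsd a b q p k i • q k) :
    ∀ i j : Fin r, (i:ℕ) < (j:ℕ) → polyInner a b (q i) (q j) = 0 := by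
  have key : ∀ n : ℕ, ∀ i j : Fin r, (i:ℕ) < (j:ℕ) → (j:ℕ) ≤ n →
      polyInner a b (q i) (q j) = 0 := by
    intro n
    induction n with
    | zero => intro i j hij hj; omega
    | succ n ih =>
      intro i j hij hj
      rcases Nat.lt_succ_iff_lt_or_eq.mp (Nat.lt_succ_of_le hj) with h | h
      · exact ih i j hij (by omega)
      · rw [hq' j (by omega), PI.sub_right, PI.sum_right]
        have e : ∑ k ∈ ffil r (j:ℕ), polyInner a b (q i) (gsd a b q p k j • q k)
            = polyInner a b (q i) (p j) := by
          rw [Finset.sum_eq_single_of_mem i]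
          · rw [PI.smul_right, gsd, div_mul_cancel₀]
            exact (PI.self_pos hab (hqne i)).ne'
          · simp only [ffil, Finset.mem_filter, Finset.mem_univ, true_and]
            omega
          · intro k hk hki
            rw [PI.smul_right]
            simp only [ffil, Finset.mem_filter, Finset.mem_univ, true_and] at hk
            rcases lt_or_gt_of_ne (fun hv : (i:ℕ) = (k:ℕ) => hki (Fin.ext hv.symm)) with hlt | hgt
            · rw [ih i k hlt (by omega), mul_zero]
            · rw [PI.comm, ih k i hgt (by omega), mul_zero]
        rw [e]
        ring
  exact fun i j hij => key r i j hij (by omega)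

lemma sum_left {ι : Type*} (s : Finset ι) (f : ι → Polynomial ℝ) (g : Polynomial ℝ) :
    polyInner a b (∑ i ∈ s, f i) g = ∑ i ∈ s, polyInner a b (f i) g := by
  rw [PI.comm, PI.sum_right]
  exact Finset.sum_congr rfl fun i _ => PI.comm _ _

lemma orth_res_q (hab : a < b) (hqne : ∀ i : Fin r, q i ≠ 0)
    (horth : ∀ i j : Fin r, (i:ℕ) < (j:ℕ) → polyInner a b (q i) (q j) = 0)
    (l : Fin r) (K : ℕ) (j : Fin r) (hj : (j:ℕ) < K) :
    polyInner a b (q j) (p l - ∑ t ∈ ffil r K, gsd a b q p t l • q t) = 0 := by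
  rw [PI.sub_right, PI.sum_right]
  have e : ∑ t ∈ ffil r K, polyInner a b (q j) (gsd a b q p t l • q t)
      = polyInner a b (q j) (p l) := by
    rw [Finset.sum_eq_single_of_mem j
      (by simp only [ffil, Finset.mem_filter, Finset.mem_univ, true_and]; omega)]
    · rw [PI.smul_right, gsd, div_mul_cancel₀]
      exact (PI.self_pos hab (hqne j)).ne'
    · intro t ht hti
      rw [PI.smul_right]
      rcases lt_or_gt_of_ne (fun hv : (j:ℕ) = (t:ℕ) => hti (Fin.ext hv.symm)) with hlt | hgt
      · rw [horth j t hlt, mul_zero]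
      · rw [PI.comm, horth t j hgt, mul_zero]
  rw [e]
  ring

lemma orth_res_p (hab : a < b) (hqne : ∀ i : Fin r, q i ≠ 0)
    (horth : ∀ i j : Fin r, (i:ℕ) < (j:ℕ) → polyInner a b (q i) (q j) = 0)
    (hq0 : ∀ i : Fin r, (i:ℕ) = 0 → q i = p i)
    (hq' : ∀ i : Fin r, 1 ≤ (i:ℕ) → q i = p i - ∑ k ∈ ffil r (i:ℕ), gsd a b q p k i • q k)
    (l : Fin r) (K : ℕ) (i : Fin r) (hi : (i:ℕ) < K) :
    polyInner a b (p i) (p l - ∑ t ∈ ffil r K, gsd a b q p t l • q t) = 0 := by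
  by_cases hi0 : (i:ℕ) = 0
  · rw [← hq0 i hi0]
    exact orth_res_q hab hqne horth l K i hi
  · have hpi : p i = q i + ∑ k ∈ ffil r (i:ℕ), gsd a b q p k i • q k := by
      rw [hq' i (by omega)]
      ring
    rw [hpi, PI.add_left, sum_left,
      orth_res_q hab hqne horth l K i hi]
    rw [Finset.sum_eq_zero, add_zero]
    intro k hk
    simp only [ffil, Finset.mem_filter, Finset.mem_univ, true_and] at hk
    rw [PI.smul_left, orth_res_q hab hqne horth l K k (by omega), mul_zero]

lemma min_res (hab : a < b) (hqne : ∀ i : Fin r, q i ≠ 0)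
    (horth : ∀ i j : Fin r, (i:ℕ) < (j:ℕ) → polyInner a b (q i) (q j) = 0)
    (hq0 : ∀ i : Fin r, (i:ℕ) = 0 → q i = p i)
    (hq' : ∀ i : Fin r, 1 ≤ (i:ℕ) → q i = p i - ∑ k ∈ ffil r (i:ℕ), gsd a b q p k i • q k)
    (l : Fin r) (K : ℕ) (c : Fin r → ℝ) :
    polyInner a b (p l - ∑ t ∈ ffil r K, gsd a b q p t l • q t)
        (p l - ∑ t ∈ ffil r K, gsd a b q p t l • q t)
      ≤ polyInner a b (p l - ∑ i ∈ ffil r K, c i • p i) (p l - ∑ i ∈ ffil r K, c i • p i) := by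
  set g := p l - ∑ t ∈ ffil r K, gsd a b q p t l • q t with hg
  set h := (∑ t ∈ ffil r K, gsd a b q p t l • q t) - ∑ i ∈ ffil r K, c i • p i with hh
  have hfgh : p l - ∑ i ∈ ffil r K, c i • p i = g + h := by
    rw [hg, hh]; ring
  have hgh : polyInner a b g h = 0 := by
    rw [hh, PI.sub_right, PI.sum_right, PI.sum_right]
    have e1 : ∑ t ∈ ffil r K, polyInner a b g (gsd a b q p t l • q t) = 0 := by
      refine Finset.sum_eq_zero fun t ht => ?_
      simp only [ffil, Finset.mem_filter, Finset.mem_univ, true_and] at ht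
      rw [PI.smul_right, PI.comm, orth_res_q hab hqne horth l K t ht, mul_zero]
    have e2 : ∑ t ∈ ffil r K, polyInner a b g (c t • p t) = 0 := by
      refine Finset.sum_eq_zero fun t ht => ?_
      simp only [ffil, Finset.mem_filter, Finset.mem_univ, true_and] at ht
      rw [PI.smul_right, PI.comm, orth_res_p hab hqne horth hq0 hq' l K t ht, mul_zero]
    rw [e1, e2]
    ring
  rw [hfgh, PI.add_left, PI.add_right, PI.add_right, hgh, PI.comm h g, hgh]
  have := PI.self_nonneg hab h
  linarith

lemma gsB_nonneg {Cq : ℝ} (hCq1 : 1 ≤ Cq) (r : ℕ) : ∀ n, 0 ≤ gsB Cq r n := by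
  intro n
  induction n with
  | zero => simp [gsB]
  | succ n ih =>
    show (0:ℝ) ≤ Cq + r * Cq * gsB Cq r n
    have : (0:ℝ) ≤ r * Cq * gsB Cq r n := by positivity
    linarith

lemma gsB_step {Cq : ℝ} (hCq1 : 1 ≤ Cq) {r : ℕ} (hr : 1 ≤ r) (n : ℕ) :
    gsB Cq r n ≤ gsB Cq r (n+1) := by
  show gsB Cq r n ≤ Cq + r * Cq * gsB Cq r n
  have h1 : (1:ℝ) ≤ r := by exact_mod_cast hr
  have h2 : (0:ℝ) ≤ gsB Cq r n := gsB_nonneg hCq1 r n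
  have h4 : (1:ℝ) ≤ r * Cq := by nlinarith
  nlinarith [mul_le_mul_of_nonneg_right h4 h2]

lemma rep_bounded
    (hq0 : ∀ i : Fin r, (i:ℕ) = 0 → q i = p i)
    (hq' : ∀ i : Fin r, 1 ≤ (i:ℕ) → q i = p i - ∑ k ∈ ffil r (i:ℕ), gsd a b q p k i • q k)
    {Cq : ℝ} (hCq1 : 1 ≤ Cq) (hr : 1 ≤ r)
    (hd : ∀ k i : Fin r, (k:ℕ) < (i:ℕ) → |gsd a b q p k i| ≤ Cq) :
    ∀ n : ℕ, ∀ i : Fin r, (i:ℕ) ≤ n → ∃ c : Fin r → ℝ,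
      (∀ t, |c t| ≤ gsB Cq r n) ∧ q i = p i - ∑ j ∈ ffil r (i:ℕ), c j • p j := by
  intro n
  induction n with
  | zero =>
    intro i hi
    refine ⟨0, fun t => by simp [gsB], ?_⟩
    have h1 : (i:ℕ) = 0 := Nat.le_zero.mp hi
    have h2 : ffil r (i:ℕ) = ∅ := by
      rw [h1, ffil]
      exact Finset.filter_false_of_mem (fun x _ => by omega)
    rw [h2, hq0 i h1]
    simp
  | succ n ih =>
    intro i hi
    rcases Nat.lt_succ_iff_lt_or_eq.mp (Nat.lt_succ_of_le hi) with h | h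
    · obtain ⟨c, hc1, hc2⟩ := ih i (by omega)
      exact ⟨c, fun t => le_trans (hc1 t) (gsB_step hCq1 hr n), hc2⟩
    · have hi1 : 1 ≤ (i:ℕ) := by omega
      have H : ∀ j : Fin r, ∃ c : Fin r → ℝ, (∀ t, |c t| ≤ gsB Cq r n) ∧
          ((j:ℕ) ≤ n → q j = p j - ∑ t ∈ ffil r (j:ℕ), c t • p t) := by
        intro j
        by_cases hj : (j:ℕ) ≤ n
        · obtain ⟨c, hc1, hc2⟩ := ih j hj
          exact ⟨c, hc1, fun _ => hc2⟩
        · exact ⟨0, fun t => by simpa using gsB_nonneg hCq1 r n, fun h' => absurd h' hj⟩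
      choose cc hcc1 hcc2 using H
      set e : Fin r → ℝ := fun t =>
        if (t:ℕ) < (i:ℕ) then gsd a b q p t i
          - ∑ j ∈ Finset.univ.filter (fun j : Fin r => (t:ℕ) < (j:ℕ) ∧ (j:ℕ) < (i:ℕ)),
            gsd a b q p j i * cc j t
        else 0 with he
      refine ⟨e, ?_, ?_⟩
      · intro t
        rw [he]
        by_cases ht : (t:ℕ) < (i:ℕ)
        · simp only [if_pos ht]
          have h1 : |gsd a b q p t i| ≤ Cq := hd t i ht
          have h2 : |∑ j ∈ Finset.univ.filter (fun j : Fin r => (t:ℕ) < (j:ℕ) ∧ (j:ℕ) < (i:ℕ)),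
              gsd a b q p j i * cc j t| ≤ r * (Cq * gsB Cq r n) := by
            refine le_trans (Finset.abs_sum_le_sum_abs _ _) ?_
            have hcard : (Finset.univ.filter
                (fun j : Fin r => (t:ℕ) < (j:ℕ) ∧ (j:ℕ) < (i:ℕ))).card ≤ r := by
              exact le_trans (Finset.card_filter_le _ _) (by simp)
            refine le_trans (Finset.sum_le_card_nsmul _ _ (Cq * gsB Cq r n) ?_) ?_
            · intro j hj
              simp only [Finset.mem_filter, Finset.mem_univ, true_and] at hj
              rw [abs_mul]
              exact mul_le_mul (hd j i hj.2) (hcc1 j t) (abs_nonneg _) (by linarith)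
            · rw [nsmul_eq_mul]
              apply mul_le_mul_of_nonneg_right _ (by
                have := gsB_nonneg hCq1 r n
                positivity)
              exact_mod_cast hcard
          calc |gsd a b q p t i - ∑ j ∈ Finset.univ.filter
                (fun j : Fin r => (t:ℕ) < (j:ℕ) ∧ (j:ℕ) < (i:ℕ)), gsd a b q p j i * cc j t|
              ≤ |gsd a b q p t i| + |∑ j ∈ Finset.univ.filter
                (fun j : Fin r => (t:ℕ) < (j:ℕ) ∧ (j:ℕ) < (i:ℕ)), gsd a b q p j i * cc j t| :=
                abs_sub _ _
          _ ≤ Cq + r * (Cq * gsB Cq r n) := add_le_add h1 h2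
          _ = gsB Cq r (n+1) := by rw [show gsB Cq r (n+1) = Cq + r * Cq * gsB Cq r n from rfl]; ring
        · simp only [if_neg ht, abs_zero]
          exact le_trans (gsB_nonneg hCq1 r n) (gsB_step hCq1 hr n)
      · rw [hq' i hi1]
        congr 1
        calc ∑ k ∈ ffil r (i:ℕ), gsd a b q p k i • q k
            = ∑ j ∈ Finset.univ.filter (fun j : Fin r => (j:ℕ) < (i:ℕ)),
                (fun j => gsd a b q p j i) j • (p j
                  - ∑ t ∈ Finset.univ.filter (fun t : Fin r => (t:ℕ) < (j:ℕ)), cc j t • p t) := by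
              refine Finset.sum_congr rfl fun j hj => ?_
              have hjn : (j:ℕ) ≤ n := by
                simp only [ffil, Finset.mem_filter, Finset.mem_univ, true_and] at hj
                omega
              rw [hcc2 j hjn]
              rfl
        _ = ∑ t ∈ Finset.univ.filter (fun t : Fin r => (t:ℕ) < (i:ℕ)),
              ((fun j => gsd a b q p j i) t
                - ∑ j ∈ Finset.univ.filter (fun j : Fin r => (t:ℕ) < (j:ℕ) ∧ (j:ℕ) < (i:ℕ)),
                  (fun j => gsd a b q p j i) j * cc j t) • p t :=
            sum_expand (i:ℕ) (fun j => gsd a b q p j i) cc p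
        _ = ∑ j ∈ Finset.univ.filter (fun j : Fin r => (j:ℕ) < (i:ℕ)), e j • p j := by
              refine Finset.sum_congr rfl fun t ht => ?_
              simp only [Finset.mem_filter, Finset.mem_univ, true_and] at ht
              rw [he]
              simp only [if_pos ht]

end Main

def SFull (r : ℕ) (a b : ℝ) (p : Fin r → Polynomial ℝ) (K : ℕ) (l : Fin r) : Set ℝ :=
  {y | ∃ c : Fin r → ℝ, y = ∫ x in a..b,
    |(p l).eval x - ∑ i ∈ Finset.univ.filter (fun i : Fin r => (i : ℕ) < K), c i * (p i).eval x|}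

/-- Quantitative bounds for the Gram–Schmidt coefficients of polynomials satisfying the
ordering assumptions, and the resulting comparability of the infima over all real
coefficients with the infima over coefficients in a fixed compact interval. -/
theorem stmt3 (r m : ℕ) (hr : 2 ≤ r) (hm : 1 ≤ m) :
    ∃ Ct C₁ C₂ : ℝ,
      ∀ p : Fin r → Polynomial ℝ, (∀ i, (p i).natDegree ≤ m) → LinearIndependent ℝ p →
      ∀ a b : ℝ, a < b →
      (∀ l : Fin r, (∫ x in a..b, |(p (⟨0, by omega⟩ : Fin r)).eval x|) ≥ ∫ x in a..b, |(p l).eval x|) →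
      (∀ k : Fin r, 1 ≤ (k : ℕ) → (k : ℕ) ≤ r - 2 → ∀ l : Fin r, k < l →
        sInf {y | ∃ c : Fin r → ℝ, y = ∫ x in a..b,
            |(p k).eval x - ∑ i ∈ Finset.univ.filter (fun i : Fin r => (i : ℕ) < (k : ℕ)),
              c i * (p i).eval x|}
          ≥ sInf {y | ∃ c : Fin r → ℝ, y = ∫ x in a..b,
            |(p l).eval x - ∑ i ∈ Finset.univ.filter (fun i : Fin r => (i : ℕ) < (k : ℕ)),
              c i * (p i).eval x|}) →
      ∀ q : Fin r → Polynomial ℝ,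
        q ⟨0, by omega⟩ = p ⟨0, by omega⟩ →
        (∀ i : Fin r, 1 ≤ (i : ℕ) →
          q i = p i - ∑ k ∈ Finset.univ.filter (fun k : Fin r => k < i),
            (polyInner a b (q k) (p i) / polyInner a b (q k) (q k)) • q k) →
        (∀ i l : Fin r, i < l →
          |polyInner a b (q i) (p l) / polyInner a b (q i) (q i)| ≤ Ct) ∧
        (∀ k : ℕ, 1 ≤ k → ∀ l : Fin r, k ≤ (l : ℕ) →
          (1 / C₁) * sInf {y | ∃ c : Fin r → ℝ, (∀ i, c i ∈ Icc (-C₂) C₂) ∧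
              y = ∫ x in a..b,
                |(p l).eval x - ∑ i ∈ Finset.univ.filter (fun i : Fin r => (i : ℕ) < k),
                  c i * (p i).eval x|}
            ≤ sInf {y | ∃ c : Fin r → ℝ, y = ∫ x in a..b,
                |(p l).eval x - ∑ i ∈ Finset.univ.filter (fun i : Fin r => (i : ℕ) < k),
                  c i * (p i).eval x|} ∧
          sInf {y | ∃ c : Fin r → ℝ, y = ∫ x in a..b,
                |(p l).eval x - ∑ i ∈ Finset.univ.filter (fun i : Fin r => (i : ℕ) < k),
                  c i * (p i).eval x|}
            ≤ C₁ * sInf {y | ∃ c : Fin r → ℝ, (∀ i, c i ∈ Icc (-C₂) C₂) ∧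
              y = ∫ x in a..b,
                |(p l).eval x - ∑ i ∈ Finset.univ.filter (fun i : Fin r => (i : ℕ) < k),
                  c i * (p i).eval x|}) := by

  classical
  obtain ⟨Cq, hCq1, hCq⟩ := norm_equiv_transfer m
  have hCq0 : (0:ℝ) < Cq := lt_of_lt_of_le one_pos hCq1
  refine ⟨Cq, Cq, Cq + r * Cq * gsB Cq r r, ?_⟩
  intro p hdeg hli a b hab h0 hord q hq0 hq
  have hba : (0:ℝ) < b - a := sub_pos.2 hab
  have hq0' : ∀ i : Fin r, (i:ℕ) = 0 → q i = p i := by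
    intro i hi
    have hieq : i = (⟨0, by omega⟩ : Fin r) := Fin.ext hi
    rw [hieq, hq0]
  have hq' : ∀ i : Fin r, 1 ≤ (i:ℕ) →
      q i = p i - ∑ k ∈ ffil r (i:ℕ), gsd a b q p k i • q k := by
    intro i hi
    rw [hq i hi]
    congr 1
  have hrep := rep_exists hq0' hq'
  have hqne := q_ne_zero hli hrep
  have horth := orth_q hab hqne hq'
  have hdegc : ∀ (l : Fin r) (s : Finset (Fin r)) (c : Fin r → ℝ),
      (p l - ∑ i ∈ s, c i • p i).natDegree ≤ m := by
    intro l s c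
    refine le_trans (Polynomial.natDegree_sub_le _ _) (max_le (hdeg l) ?_)
    refine Polynomial.natDegree_sum_le_of_forall_le _ _ fun i _ => ?_
    exact le_trans (Polynomial.natDegree_smul_le _ _) (hdeg i)
  have heval : ∀ (l : Fin r) (s : Finset (Fin r)) (c : Fin r → ℝ) (x : ℝ),
      (p l - ∑ i ∈ s, c i • p i).eval x = (p l).eval x - ∑ i ∈ s, c i * (p i).eval x := by
    intro l s c x
    rw [Polynomial.eval_sub, Polynomial.eval_finset_sum]
    congr 1
    exact Finset.sum_congr rfl fun i _ => by rw [Polynomial.eval_smul, smul_eq_mul]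
  have hInt_eq : ∀ (l : Fin r) (K : ℕ) (c : Fin r → ℝ),
      (∫ x in a..b, |(p l - ∑ i ∈ ffil r K, c i • p i).eval x|)
      = ∫ x in a..b, |(p l).eval x
          - ∑ i ∈ Finset.univ.filter (fun i : Fin r => (i : ℕ) < K), c i * (p i).eval x| :=
    fun l K c => intervalIntegral.integral_congr fun x _ => by rw [heval]; rfl
  have hSne : ∀ (K : ℕ) (l : Fin r), (SFull r a b p K l).Nonempty :=
    fun K l => ⟨_, 0, rfl⟩
  have hSbdd : ∀ (K : ℕ) (l : Fin r), BddBelow (SFull r a b p K l) := by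
    intro K l
    refine ⟨0, fun y hy => ?_⟩
    obtain ⟨c, rfl⟩ := hy
    exact intervalIntegral.integral_nonneg hab.le fun x _ => abs_nonneg _
  have hSnonneg : ∀ (K : ℕ) (l : Fin r), 0 ≤ sInf (SFull r a b p K l) := by
    intro K l
    apply le_csInf (hSne K l)
    rintro y ⟨c, rfl⟩
    exact intervalIntegral.integral_nonneg hab.le fun x _ => abs_nonneg _
  -- lower bound for all elements of SFull in terms of the residual
  have hG_le_all : ∀ (l : Fin r) (K : ℕ), ∀ y ∈ SFull r a b p K l,
      (b - a) * Real.sqrt (polyInner a b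
          (p l - ∑ t ∈ ffil r K, gsd a b q p t l • q t)
          (p l - ∑ t ∈ ffil r K, gsd a b q p t l • q t) / Cq) ≤ y := by
    intro l K y hy
    obtain ⟨c, rfl⟩ := hy
    rw [← hInt_eq l K c]
    set f := p l - ∑ i ∈ ffil r K, c i • p i with hf
    set G := p l - ∑ t ∈ ffil r K, gsd a b q p t l • q t with hG
    have h1 : polyInner a b f f ≤ Cq * ((b-a)⁻¹ * ∫ x in a..b, |f.eval x|)^2 :=
      hCq f (hdegc l _ c) a b hab
    have h2 : polyInner a b G G ≤ polyInner a b f f :=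
      min_res hab hqne horth hq0' hq' l K c
    have h3 : 0 ≤ (b-a)⁻¹ * ∫ x in a..b, |f.eval x| :=
      mul_nonneg (inv_nonneg.2 hba.le)
        (intervalIntegral.integral_nonneg hab.le fun x _ => abs_nonneg _)
    have h4 : polyInner a b G G / Cq ≤ ((b-a)⁻¹ * ∫ x in a..b, |f.eval x|)^2 := by
      rw [div_le_iff₀ hCq0]
      calc polyInner a b G G ≤ polyInner a b f f := h2
      _ ≤ Cq * ((b-a)⁻¹ * ∫ x in a..b, |f.eval x|)^2 := h1
      _ = ((b-a)⁻¹ * ∫ x in a..b, |f.eval x|)^2 * Cq := by ring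
    have h5 := Real.sqrt_le_sqrt h4
    rw [Real.sqrt_sq h3] at h5
    calc (b - a) * Real.sqrt (polyInner a b G G / Cq)
        ≤ (b - a) * ((b-a)⁻¹ * ∫ x in a..b, |f.eval x|) :=
          mul_le_mul_of_nonneg_left h5 hba.le
    _ = ∫ x in a..b, |f.eval x| := by field_simp
  have hG_le_sInf : ∀ (l : Fin r) (K : ℕ),
      (b - a) * Real.sqrt (polyInner a b
          (p l - ∑ t ∈ ffil r K, gsd a b q p t l • q t)
          (p l - ∑ t ∈ ffil r K, gsd a b q p t l • q t) / Cq)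
        ≤ sInf (SFull r a b p K l) :=
    fun l K => le_csInf (hSne K l) (hG_le_all l K)
  -- Part 1
  have part1 : ∀ i l : Fin r, i < l → |gsd a b q p i l| ≤ Cq := by
    intro i l hil
    have hil' : (i:ℕ) < (l:ℕ) := hil
    have hq_in : (∫ x in a..b, |(q i).eval x|) ∈ SFull r a b p (i:ℕ) i := by
      obtain ⟨c, hc⟩ := hrep i
      exact ⟨c, by rw [← hInt_eq i (i:ℕ) c, hc]⟩
    have hord2 : sInf (SFull r a b p (i:ℕ) l) ≤ sInf (SFull r a b p (i:ℕ) i) := by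
      by_cases hi0 : (i:ℕ) = 0
      · have hemp : Finset.univ.filter (fun t : Fin r => (t:ℕ) < 0) = (∅ : Finset (Fin r)) :=
          Finset.filter_false_of_mem (fun x _ => by omega)
        have hsingle : ∀ l' : Fin r, SFull r a b p 0 l'
            = {(∫ x in a..b, |(p l').eval x|)} := by
          intro l'
          have hval : ∀ c : Fin r → ℝ, (∫ x in a..b,
              |(p l').eval x - ∑ t ∈ Finset.univ.filter (fun t : Fin r => (t:ℕ) < 0),
                c t * (p t).eval x|) = ∫ x in a..b, |(p l').eval x| := by
            intro c
            rw [hemp]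
            simp
          ext y
          constructor
          · rintro ⟨c, rfl⟩
            exact hval c
          · rintro rfl
            exact ⟨0, (hval 0).symm⟩
        rw [hi0, hsingle l, hsingle i, csInf_singleton, csInf_singleton]
        have hieq : i = (⟨0, by omega⟩ : Fin r) := Fin.ext hi0
        rw [hieq]
        exact h0 l
      · exact hord i (by omega) (by omega) l hil
    have c2 : ((b-a)⁻¹ * ∫ x in a..b, |(q i).eval x|)^2 ≤ polyInner a b (q i) (q i) :=
      PI.n1_sq_le hab (q i)
    set G := p l - ∑ t ∈ ffil r (i:ℕ), gsd a b q p t l • q t with hG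
    have c3 : Real.sqrt (polyInner a b G G / Cq)
        ≤ (b-a)⁻¹ * ∫ x in a..b, |(q i).eval x| := by
      have h6 := (hG_le_sInf l (i:ℕ)).trans (hord2.trans (csInf_le (hSbdd (i:ℕ) i) hq_in))
      calc Real.sqrt (polyInner a b G G / Cq)
          = (b-a)⁻¹ * ((b - a) * Real.sqrt (polyInner a b G G / Cq)) := by field_simp
      _ ≤ (b-a)⁻¹ * ∫ x in a..b, |(q i).eval x| :=
          mul_le_mul_of_nonneg_left h6 (inv_nonneg.2 hba.le)
    have c4 : polyInner a b G G ≤ Cq * polyInner a b (q i) (q i) := by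
      have hL : 0 ≤ polyInner a b G G / Cq := div_nonneg (PI.self_nonneg hab _) hCq0.le
      have : polyInner a b G G / Cq ≤ polyInner a b (q i) (q i) := by
        calc polyInner a b G G / Cq = Real.sqrt (polyInner a b G G / Cq)^2 :=
            (Real.sq_sqrt hL).symm
        _ ≤ ((b-a)⁻¹ * ∫ x in a..b, |(q i).eval x|)^2 :=
            pow_le_pow_left₀ (Real.sqrt_nonneg _) c3 2
        _ ≤ polyInner a b (q i) (q i) := c2
      rw [div_le_iff₀ hCq0] at this
      linarith [this]
    have c5 : polyInner a b (q i) (p l) = polyInner a b (q i) G := by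
      rw [hG, PI.sub_right, PI.sum_right, Finset.sum_eq_zero, sub_zero]
      intro t ht
      simp only [ffil, Finset.mem_filter, Finset.mem_univ, true_and] at ht
      rw [PI.smul_right, PI.comm, horth t i ht, mul_zero]
    have c6 := PI.cs hab (q i) G
    have hqq : 0 < polyInner a b (q i) (q i) := PI.self_pos hab (hqne i)
    rw [gsd, c5, abs_div, abs_of_pos hqq, div_le_iff₀ hqq]
    have c7 : (polyInner a b (q i) G)^2 ≤ Cq * (polyInner a b (q i) (q i))^2 := by
      calc (polyInner a b (q i) G)^2 ≤ polyInner a b (q i) (q i) * polyInner a b G G := c6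
      _ ≤ polyInner a b (q i) (q i) * (Cq * polyInner a b (q i) (q i)) :=
          mul_le_mul_of_nonneg_left c4 hqq.le
      _ = Cq * (polyInner a b (q i) (q i))^2 := by ring
    nlinarith [sq_abs (polyInner a b (q i) G), abs_nonneg (polyInner a b (q i) G),
      mul_pos hCq0 hqq]
  constructor
  · intro i l hil
    exact part1 i l hil
  · intro k hk1 l hkl
    have hd' : ∀ k' i' : Fin r, (k':ℕ) < (i':ℕ) → |gsd a b q p k' i'| ≤ Cq :=
      fun k' i' h => part1 k' i' h
    have TB := rep_bounded hq0' hq' hCq1 (by omega : 1 ≤ r) hd' r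
    have H : ∀ j : Fin r, ∃ c : Fin r → ℝ, (∀ t, |c t| ≤ gsB Cq r r) ∧
        q j = p j - ∑ t ∈ ffil r (j:ℕ), c t • p t := fun j => TB j (le_of_lt j.isLt)
    choose cc hcc1 hcc2 using H
    set C2 := Cq + r * Cq * gsB Cq r r with hC2
    set e : Fin r → ℝ := fun t =>
      if (t:ℕ) < k then gsd a b q p t l
        - ∑ j ∈ Finset.univ.filter (fun j : Fin r => (t:ℕ) < (j:ℕ) ∧ (j:ℕ) < k),
          gsd a b q p j l * cc j t
      else 0 with he
    have heB : ∀ t : Fin r, |e t| ≤ C2 := by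
      intro t
      rw [he]
      by_cases ht : (t:ℕ) < k
      · simp only [if_pos ht]
        have h1 : |gsd a b q p t l| ≤ Cq := hd' t l (by omega)
        have h2 : |∑ j ∈ Finset.univ.filter (fun j : Fin r => (t:ℕ) < (j:ℕ) ∧ (j:ℕ) < k),
            gsd a b q p j l * cc j t| ≤ r * (Cq * gsB Cq r r) := by
          refine le_trans (Finset.abs_sum_le_sum_abs _ _) ?_
          have hcard : (Finset.univ.filter
              (fun j : Fin r => (t:ℕ) < (j:ℕ) ∧ (j:ℕ) < k)).card ≤ r := by
            exact le_trans (Finset.card_filter_le _ _) (by simp)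
          refine le_trans (Finset.sum_le_card_nsmul _ _ (Cq * gsB Cq r r) ?_) ?_
          · intro j hj
            simp only [Finset.mem_filter, Finset.mem_univ, true_and] at hj
            rw [abs_mul]
            exact mul_le_mul (hd' j l (by omega)) (hcc1 j t) (abs_nonneg _) (by linarith)
          · rw [nsmul_eq_mul]
            apply mul_le_mul_of_nonneg_right _ (by
              have := gsB_nonneg hCq1 r r
              positivity)
            exact_mod_cast hcard
        calc |gsd a b q p t l - ∑ j ∈ Finset.univ.filter
              (fun j : Fin r => (t:ℕ) < (j:ℕ) ∧ (j:ℕ) < k), gsd a b q p j l * cc j t|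
            ≤ |gsd a b q p t l| + |∑ j ∈ Finset.univ.filter
              (fun j : Fin r => (t:ℕ) < (j:ℕ) ∧ (j:ℕ) < k), gsd a b q p j l * cc j t| :=
              abs_sub _ _
        _ ≤ Cq + r * (Cq * gsB Cq r r) := add_le_add h1 h2
        _ = C2 := by rw [hC2]; ring
      · simp only [if_neg ht, abs_zero]
        rw [hC2]
        have := gsB_nonneg hCq1 r r
        positivity
    have hGrep : (∑ t ∈ ffil r k, gsd a b q p t l • q t) = ∑ t ∈ ffil r k, e t • p t := by
      calc ∑ t ∈ ffil r k, gsd a b q p t l • q t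
          = ∑ j ∈ Finset.univ.filter (fun j : Fin r => (j:ℕ) < k),
              (fun j => gsd a b q p j l) j • (p j
                - ∑ t ∈ Finset.univ.filter (fun t : Fin r => (t:ℕ) < (j:ℕ)), cc j t • p t) := by
            refine Finset.sum_congr rfl fun j hj => ?_
            rw [hcc2 j]
            rfl
      _ = ∑ t ∈ Finset.univ.filter (fun t : Fin r => (t:ℕ) < k),
            ((fun j => gsd a b q p j l) t
              - ∑ j ∈ Finset.univ.filter (fun j : Fin r => (t:ℕ) < (j:ℕ) ∧ (j:ℕ) < k),
                (fun j => gsd a b q p j l) j * cc j t) • p t :=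
          sum_expand k (fun j => gsd a b q p j l) cc p
      _ = ∑ t ∈ ffil r k, e t • p t := by
            refine Finset.sum_congr rfl fun t ht => ?_
            simp only [ffil, Finset.mem_filter, Finset.mem_univ, true_and] at ht
            rw [he]
            simp only [if_pos ht]
    set G := p l - ∑ t ∈ ffil r k, gsd a b q p t l • q t with hG
    have hGrep2 : G = p l - ∑ t ∈ ffil r k, e t • p t := by rw [hG, hGrep]
    have hC2nonneg : (0:ℝ) ≤ C2 := le_trans (abs_nonneg (e l)) (heB l)
    have hVmem : (∫ x in a..b, |G.eval x|)
        ∈ {y | ∃ c : Fin r → ℝ, (∀ i, c i ∈ Set.Icc (-C2) C2) ∧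
          y = ∫ x in a..b, |(p l).eval x
            - ∑ i ∈ Finset.univ.filter (fun i : Fin r => (i : ℕ) < k), c i * (p i).eval x|} := by
      refine ⟨e, fun i => Set.mem_Icc.2 (abs_le.1 (heB i)), ?_⟩
      rw [hGrep2]
      exact hInt_eq l k e
    set SR : Set ℝ := {y | ∃ c : Fin r → ℝ, (∀ i, c i ∈ Set.Icc (-C2) C2) ∧
        y = ∫ x in a..b, |(p l).eval x
          - ∑ i ∈ Finset.univ.filter (fun i : Fin r => (i : ℕ) < k), c i * (p i).eval x|}
      with hSR
    have hSRbdd : BddBelow SR := by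
      refine ⟨0, fun y hy => ?_⟩
      obtain ⟨c, -, rfl⟩ := hy
      exact intervalIntegral.integral_nonneg hab.le fun x _ => abs_nonneg _
    have hSRne : SR.Nonempty := ⟨_, hVmem⟩
    have hSRnonneg : 0 ≤ sInf SR := by
      apply le_csInf hSRne
      rintro y ⟨c, -, rfl⟩
      exact intervalIntegral.integral_nonneg hab.le fun x _ => abs_nonneg _
    have hsub : SR ⊆ SFull r a b p k l := by
      rintro y ⟨c, -, h⟩
      exact ⟨c, h⟩
    have hfull_le_SR : sInf (SFull r a b p k l) ≤ sInf SR :=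
      csInf_le_csInf (hSbdd k l) hSRne hsub
    have hVle : sInf SR ≤ ∫ x in a..b, |G.eval x| := csInf_le hSRbdd hVmem
    have hVbound : (∫ x in a..b, |G.eval x|) ≤ (b - a) * Real.sqrt (polyInner a b G G) := by
      have h1 : ((b-a)⁻¹ * ∫ x in a..b, |G.eval x|)^2 ≤ polyInner a b G G := PI.n1_sq_le hab G
      have h2 : 0 ≤ (b-a)⁻¹ * ∫ x in a..b, |G.eval x| :=
        mul_nonneg (inv_nonneg.2 hba.le)
          (intervalIntegral.integral_nonneg hab.le fun x _ => abs_nonneg _)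
      have h3 : (b-a)⁻¹ * (∫ x in a..b, |G.eval x|) ≤ Real.sqrt (polyInner a b G G) := by
        have h4 := Real.sqrt_le_sqrt h1
        rwa [Real.sqrt_sq h2] at h4
      calc (∫ x in a..b, |G.eval x|)
          = (b - a) * ((b-a)⁻¹ * ∫ x in a..b, |G.eval x|) := by field_simp
      _ ≤ (b - a) * Real.sqrt (polyInner a b G G) := mul_le_mul_of_nonneg_left h3 hba.le
    have hsqrtpos : 0 < Real.sqrt Cq := Real.sqrt_pos.2 hCq0
    have hkey : (b - a) * Real.sqrt (polyInner a b G G)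
        ≤ Real.sqrt Cq * sInf (SFull r a b p k l) := by
      have hfg := hG_le_sInf l k
      rw [Real.sqrt_div (PI.self_nonneg hab G) Cq] at hfg
      calc (b - a) * Real.sqrt (polyInner a b G G)
          = Real.sqrt Cq * ((b - a) * (Real.sqrt (polyInner a b G G) / Real.sqrt Cq)) := by
            field_simp
      _ ≤ Real.sqrt Cq * sInf (SFull r a b p k l) :=
          mul_le_mul_of_nonneg_left hfg hsqrtpos.le
    have hsqrt_le : Real.sqrt Cq ≤ Cq := by
      nlinarith [Real.sq_sqrt hCq0.le, Real.sqrt_nonneg Cq, hsqrtpos]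
    have hSRle : sInf SR ≤ Cq * sInf (SFull r a b p k l) := by
      calc sInf SR ≤ ∫ x in a..b, |G.eval x| := hVle
      _ ≤ (b - a) * Real.sqrt (polyInner a b G G) := hVbound
      _ ≤ Real.sqrt Cq * sInf (SFull r a b p k l) := hkey
      _ ≤ Cq * sInf (SFull r a b p k l) :=
          mul_le_mul_of_nonneg_right hsqrt_le (hSnonneg k l)
    constructor
    · have h := mul_le_mul_of_nonneg_left hSRle (by positivity : (0:ℝ) ≤ 1/Cq)
      calc (1/Cq) * sInf SR ≤ (1/Cq) * (Cq * sInf (SFull r a b p k l)) := h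
      _ = sInf (SFull r a b p k l) := by field_simp
    · refine hfull_le_SR.trans ?_
      nlinarith [hSRnonneg, hCq1]
end
end

section
/- There exist a compact set K ⊆ ℝ and jets (F_i)_{1≤i≤3} and (F_{ij})_{1≤j<i≤3} of order 2 on K such that: (1) all six jets are Whitney fields of class C² on K; (2) for every 1 ≤ k ≤ 2, every t ∈ K and all 1 ≤ j < i ≤ 3, F_{ij}^k(t) = 𝒫^k(F_i^0(t), F_j^0(t), …, F_i^k(t), F_j^k(t)); (3) for all 1 ≤ j < i ≤ 3, A_{ij}(a,b)/V_{ij}(a,b) → 0 uniformly as (b−a) ↘ 0 with a, b ∈ K; but there is no C² horizontal curve γ : ℝ → 𝔾_3 with D^kγ_i|_K = F_i^k for all 0 ≤ k ≤ 2 and 1 ≤ i ≤ 3, and D^kγ_{ij}|_K = F_{ij}^k for all 0 ≤ k ≤ 2 and 1 ≤ j < i ≤ 3. -/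
open MeasureTheory Set Filter

noncomputable section

/-- Formal Taylor polynomial of order `m` of a jet `F` at `a`. -/
def taylorPoly (m : ℕ) (F : ℕ → ℝ → ℝ) (a : ℝ) : ℝ → ℝ :=
  fun x => ∑ k ∈ Finset.range (m + 1), F k a * (x - a) ^ k / (Nat.factorial k)

/-- Derivative of the formal Taylor polynomial. -/
def taylorPolyDeriv (m : ℕ) (F : ℕ → ℝ → ℝ) (a : ℝ) : ℝ → ℝ :=
  deriv (taylorPoly m F a)

/-- A jet of order `m` on `K`: a collection of `m+1` continuous functions on `K`. -/
def IsJet (m : ℕ) (K : Set ℝ) (F : ℕ → ℝ → ℝ) : Prop :=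
  ∀ k ≤ m, ContinuousOn (F k) K

/-- Whitney field of class `C^m` on `K`. -/
def IsWhitneyField (m : ℕ) (K : Set ℝ) (F : ℕ → ℝ → ℝ) : Prop :=
  IsJet m K F ∧
  ∀ k ≤ m, ∀ ε > 0, ∃ δ > 0, ∀ a ∈ K, ∀ b ∈ K, |b - a| < δ →
    |F k b - ∑ l ∈ Finset.range (m - k + 1), F (k + l) a * (b - a) ^ l / (Nat.factorial l)|
      ≤ ε * |b - a| ^ (m - k)

/-- The polynomials `𝒫^k`. -/
def pScript (k : ℕ) (x y : ℕ → ℝ) : ℝ :=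
  (1 / 2) * ∑ l ∈ Finset.range k,
    (Nat.choose (k - 1) l : ℝ) * (x l * y (k - l) - y l * x (k - l))

/-- The quantity `A_{ij}(a,b)` associated to jets `Fi, Fj, Fij` of order `m`. -/
def Aab (m : ℕ) (Fi Fj Fij : ℕ → ℝ → ℝ) (a b : ℝ) : ℝ :=
  Fij 0 b - Fij 0 a
    - (1 / 2) * ∫ x in a..b,
        (taylorPoly m Fi a x * taylorPolyDeriv m Fj a x
          - taylorPolyDeriv m Fi a x * taylorPoly m Fj a x)
    + (1 / 2) * Fj 0 a * (Fi 0 b - taylorPoly m Fi a b)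
    - (1 / 2) * Fi 0 a * (Fj 0 b - taylorPoly m Fj a b)

/-- The quantity `V_{ij}(a,b)`. -/
def Vab (m : ℕ) (Fi Fj : ℕ → ℝ → ℝ) (a b : ℝ) : ℝ :=
  (b - a) ^ (2 * m) + (b - a) ^ m *
    ∫ x in a..b, (|taylorPolyDeriv m Fi a x| + |taylorPolyDeriv m Fj a x|)

/-- A `C^m` horizontal curve in the free step-2 Carnot group `𝔾_r`, given by its
horizontal components `g i` and vertical components `gij i j` for `j < i`. -/
def IsCmHorizontal (m r : ℕ) (g : Fin r → ℝ → ℝ) (gij : Fin r → Fin r → ℝ → ℝ) : Prop :=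
  (∀ i, ContDiff ℝ m (g i)) ∧
  (∀ i j : Fin r, j < i → ContDiff ℝ m (gij i j)) ∧
  ∀ i j : Fin r, j < i → ∀ s t : ℝ, s ≤ t →
    gij i j t - gij i j s
      = (1 / 2) * ∫ x in s..t, (g i x * deriv (g j) x - deriv (g i) x * g j x)

/-- `f` extends the jet `F` of order `m` on `K`. -/
def ExtendsJet (m : ℕ) (K : Set ℝ) (f : ℝ → ℝ) (F : ℕ → ℝ → ℝ) : Prop :=
  ∀ k ≤ m, ∀ x ∈ K, iteratedDeriv k f x = F k x

/-- The generalized `A/V` condition in `𝔾₃`. -/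
def GenAV3 (m : ℕ) (K : Set ℝ) (F : Fin 3 → ℕ → ℝ → ℝ)
    (Fij : Fin 3 → Fin 3 → ℕ → ℝ → ℝ) : Prop :=
  ∀ A : Set ℝ, IsCompact A → ∀ ε > 0, ∃ δ > 0, ∀ a ∈ K, ∀ b ∈ K, a < b → b - a < δ →
    (∀ c₂ ∈ A, ∀ c₃ ∈ A,
      |c₃ * Aab m (F 1) (F 0) (Fij 1 0) a b + Aab m (F 2) (F 1) (Fij 2 1) a b
          - c₂ * Aab m (F 2) (F 0) (Fij 2 0) a b|
        ≤ ε * ((b - a) ^ (2 * m) + (b - a) ^ m *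
            ∫ x in a..b, (|taylorPolyDeriv m (F 1) a x - c₂ * taylorPolyDeriv m (F 0) a x|
              + |taylorPolyDeriv m (F 2) a x - c₃ * taylorPolyDeriv m (F 0) a x|))) ∧
    (∀ c₁ ∈ A, ∀ c₃ ∈ A,
      |-(c₃ * Aab m (F 1) (F 0) (Fij 1 0) a b) - c₁ * Aab m (F 2) (F 1) (Fij 2 1) a b
          + Aab m (F 2) (F 0) (Fij 2 0) a b|
        ≤ ε * ((b - a) ^ (2 * m) + (b - a) ^ m *
            ∫ x in a..b, (|taylorPolyDeriv m (F 0) a x - c₁ * taylorPolyDeriv m (F 1) a x|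
              + |taylorPolyDeriv m (F 2) a x - c₃ * taylorPolyDeriv m (F 1) a x|))) ∧
    (∀ c₁ ∈ A, ∀ c₂ ∈ A,
      |Aab m (F 1) (F 0) (Fij 1 0) a b + c₁ * Aab m (F 2) (F 1) (Fij 2 1) a b
          - c₂ * Aab m (F 2) (F 0) (Fij 2 0) a b|
        ≤ ε * ((b - a) ^ (2 * m) + (b - a) ^ m *
            ∫ x in a..b, (|taylorPolyDeriv m (F 0) a x - c₁ * taylorPolyDeriv m (F 2) a x|
              + |taylorPolyDeriv m (F 1) a x - c₂ * taylorPolyDeriv m (F 2) a x|)))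

/-- The quantity `E_{ij}(a,b,c,c̃)` in `𝔾_r`. -/
def Eab (m r : ℕ) (F : Fin r → ℕ → ℝ → ℝ) (Fij : Fin r → Fin r → ℕ → ℝ → ℝ)
    (i j : Fin r) (c ct : Fin r → ℝ) (a b : ℝ) : ℝ :=
  Aab m (F i) (F j) (Fij i j) a b
    + ∑ k ∈ Finset.univ.filter (fun k : Fin r => k < j), ct k * Aab m (F j) (F k) (Fij j k) a b
    - ∑ k ∈ Finset.univ.filter (fun k : Fin r => j < k ∧ k ≠ i),
        ct k * Aab m (F k) (F j) (Fij k j) a b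
    - ∑ k ∈ Finset.univ.filter (fun k : Fin r => k < i ∧ k ≠ j),
        c k * Aab m (F i) (F k) (Fij i k) a b
    + ∑ k ∈ Finset.univ.filter (fun k : Fin r => i < k), c k * Aab m (F k) (F i) (Fij k i) a b
    + ∑ p ∈ (Finset.univ ×ˢ Finset.univ).filter
        (fun p : Fin r × Fin r => p.2 < p.1 ∧ p.1 ≠ i ∧ p.1 ≠ j ∧ p.2 ≠ i ∧ p.2 ≠ j),
        (c p.2 * ct p.1 - ct p.2 * c p.1) * Aab m (F p.1) (F p.2) (Fij p.1 p.2) a b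

/-- The quantity `Δ_i(a,b,c̃)` in `𝔾_r` (for the pair `{i,j}`). -/
def Deltab (m r : ℕ) (F : Fin r → ℕ → ℝ → ℝ) (i j : Fin r) (ct : Fin r → ℝ) (a b : ℝ) : ℝ :=
  ∫ x in a..b, |taylorPolyDeriv m (F i) a x
    - ∑ k ∈ Finset.univ.filter (fun k : Fin r => k ≠ i ∧ k ≠ j),
        ct k * taylorPolyDeriv m (F k) a x|

/-- The generalized `A/V` condition in `𝔾_r`. -/
def GenAV (m r : ℕ) (K : Set ℝ) (F : Fin r → ℕ → ℝ → ℝ)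
    (Fij : Fin r → Fin r → ℕ → ℝ → ℝ) : Prop :=
  ∀ A : Set ℝ, IsCompact A → ∀ i j : Fin r, j < i → ∀ ε > 0, ∃ δ > 0,
    ∀ a ∈ K, ∀ b ∈ K, a < b → b - a < δ →
      ∀ c ct : Fin r → ℝ, (∀ k, c k ∈ A) → (∀ k, ct k ∈ A) →
        |Eab m r F Fij i j c ct a b|
          ≤ ε * ((b - a) ^ (2 * m)
              + (b - a) ^ m * (Deltab m r F i j ct a b + Deltab m r F j i c a b))



-- ------------------------------------------------------------------
-- Auxiliary construction for the counterexample
-- ------------------------------------------------------------------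

/-- The identity jet: `F⁰ = t`, `F¹ = 1`, `F² = 0`. -/
def Gid : ℕ → ℝ → ℝ := fun k t => if k = 0 then t else if k = 1 then 1 else 0

/-- The zero jet. -/
def Zj : ℕ → ℝ → ℝ := fun _ _ => 0

/-- The function `x ↦ x^{7/2}`. -/
def phi : ℝ → ℝ := fun x => x^3 * Real.sqrt x

/-- The jet `(φ, 0, 0)`. -/
def Pj : ℕ → ℝ → ℝ := fun k t => if k = 0 then phi t else 0

/-- The compact set `{0} ∪ {2^{-n}}`. -/
def myK : Set ℝ := insert 0 (Set.range fun n : ℕ => (1/2 : ℝ)^n)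

def myF : Fin 3 → ℕ → ℝ → ℝ := fun i => if i.val = 2 then Zj else Gid
def myFij : Fin 3 → Fin 3 → ℕ → ℝ → ℝ := fun i j => if i.val = 2 ∧ j.val = 0 then Pj else Zj

lemma taylorPoly_Gid (a : ℝ) : taylorPoly 2 Gid a = fun x => x := by
  funext x
  simp [taylorPoly, Gid, Finset.sum_range_succ]

lemma taylorPolyDeriv_Gid (a : ℝ) : taylorPolyDeriv 2 Gid a = fun _ => (1:ℝ) := by
  rw [taylorPolyDeriv, taylorPoly_Gid]
  funext x; exact deriv_id x

lemma taylorPoly_Zj (a : ℝ) : taylorPoly 2 Zj a = fun _ => (0:ℝ) := by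
  funext x; simp [taylorPoly, Zj]

lemma taylorPolyDeriv_Zj (a : ℝ) : taylorPolyDeriv 2 Zj a = fun _ => (0:ℝ) := by
  rw [taylorPolyDeriv, taylorPoly_Zj]; funext x; simp

lemma whitney_Gid : IsWhitneyField 2 myK Gid := by
  constructor
  · intro k hk
    unfold Gid
    rcases k with _ | _ | k <;> simp <;> fun_prop
  · intro k hk ε hε
    refine ⟨1, one_pos, fun a ha b hb hab => ?_⟩
    have : |Gid k b - ∑ l ∈ Finset.range (2 - k + 1), Gid (k + l) a * (b - a) ^ l / (Nat.factorial l)| = 0 := by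
      interval_cases k <;> simp [Gid, Finset.sum_range_succ]
    rw [this]
    positivity

lemma whitney_Zj : IsWhitneyField 2 myK Zj := by
  constructor
  · intro k hk; unfold Zj; fun_prop
  · intro k hk ε hε
    refine ⟨1, one_pos, fun a ha b hb hab => ?_⟩
    simp [Zj]
    positivity

lemma myK_subset : myK ⊆ Set.Icc (0:ℝ) 1 := by
  rintro x (rfl | ⟨n, rfl⟩)
  · simp
  · exact ⟨by positivity, pow_le_one₀ (by norm_num) (by norm_num)⟩

lemma myK_gap {a b : ℝ} (ha : a ∈ myK) (hb : b ∈ myK) (hab : a < b) : b ≤ 2*(b-a) := by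
  obtain (rfl | ⟨m, rfl⟩) := hb
  · rcases ha with (rfl | ⟨n, rfl⟩) <;> [linarith; nlinarith [pow_pos (by norm_num : (0:ℝ) < 1/2) n]]
  · rcases ha with (rfl | ⟨n, rfl⟩)
    · linarith
    · have hnm : m < n := by
        by_contra h
        push_neg at h
        have := pow_le_pow_of_le_one (by norm_num : (0:ℝ) ≤ 1/2) (by norm_num) h
        linarith
      have h1 : (1/2:ℝ)^n ≤ (1/2:ℝ)^(m+1) :=
        pow_le_pow_of_le_one (by norm_num) (by norm_num) hnm
      have h2 : (1/2:ℝ)^(m+1) = (1/2:ℝ)^m / 2 := by rw [pow_succ]; ring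
      linarith

lemma phi_mono {a b : ℝ} (ha : 0 ≤ a) (hab : a ≤ b) : phi a ≤ phi b := by
  unfold phi
  have := Real.sqrt_le_sqrt hab
  have := Real.sqrt_nonneg a
  nlinarith [pow_le_pow_left₀ ha hab 3, pow_nonneg ha 3, pow_nonneg (le_trans ha hab) 3]

lemma phi_bound {a b : ℝ} (ha : a ∈ myK) (hb : b ∈ myK) (hab : a < b) :
    |phi b - phi a| ≤ 8 * (b-a)^3 * Real.sqrt b := by
  have ha0 : 0 ≤ a := (myK_subset ha).1
  have hb0 : 0 ≤ b := (myK_subset hb).1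
  have h1 : phi a ≤ phi b := phi_mono ha0 hab.le
  have h2 : 0 ≤ phi a := by unfold phi; positivity
  rw [abs_of_nonneg (by linarith)]
  have hgap := myK_gap ha hb hab
  have h3 : phi b ≤ 8 * (b-a)^3 * Real.sqrt b := by
    unfold phi
    have : b^3 ≤ (2*(b-a))^3 := pow_le_pow_left₀ hb0 hgap 3
    nlinarith [Real.sqrt_nonneg b]
  linarith

lemma phi_bound1 {a b : ℝ} (ha : a ∈ myK) (hb : b ∈ myK) :
    |phi b - phi a| ≤ 8 * |b-a|^3 := by
  rcases lt_trichotomy a b with h | h | h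
  · have := phi_bound ha hb h
    have hb1 : Real.sqrt b ≤ 1 := by
      rw [show (1:ℝ) = Real.sqrt 1 by simp]
      exact Real.sqrt_le_sqrt (myK_subset hb).2
    have h30 : (0:ℝ) ≤ (b-a)^3 := pow_nonneg (by linarith) 3
    calc |phi b - phi a| ≤ 8*(b-a)^3 * Real.sqrt b := this
      _ ≤ 8*(b-a)^3 * 1 := by nlinarith
      _ = 8*|b-a|^3 := by rw [abs_of_pos (by linarith : (0:ℝ) < b - a)]; ring
  · simp [h]
  · have := phi_bound hb ha h
    have hb1 : Real.sqrt a ≤ 1 := by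
      rw [show (1:ℝ) = Real.sqrt 1 by simp]
      exact Real.sqrt_le_sqrt (myK_subset ha).2
    have h30 : (0:ℝ) ≤ (a-b)^3 := pow_nonneg (by linarith) 3
    rw [abs_sub_comm] at this
    calc |phi b - phi a| ≤ 8*(a-b)^3 * Real.sqrt a := this
      _ ≤ 8*(a-b)^3 * 1 := by nlinarith
      _ = 8*|b-a|^3 := by rw [abs_sub_comm, abs_of_pos (by linarith : (0:ℝ) < a - b)]; ring

lemma phi_bound2 {a b : ℝ} (ha : a ∈ myK) (hb : b ∈ myK) (hab : a < b) :
    |phi b - phi a| ≤ 8 * (b-a)^3 * Real.sqrt (2*(b-a)) := by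
  have := phi_bound ha hb hab
  have hsq : Real.sqrt b ≤ Real.sqrt (2*(b-a)) := Real.sqrt_le_sqrt (myK_gap ha hb hab)
  have h30 : (0:ℝ) ≤ (b-a)^3 := pow_nonneg (by linarith) 3
  nlinarith [Real.sqrt_nonneg b]

lemma whitney_Pj : IsWhitneyField 2 myK Pj := by
  constructor
  · intro k hk
    unfold Pj phi
    rcases k with _ | k <;> simp <;> fun_prop
  · intro k hk ε hε
    interval_cases k
    · refine ⟨min 1 (ε/8), by positivity, fun a ha b hb hab => ?_⟩
      have h1 := phi_bound1 ha hb
      have h2 : |b - a| < ε / 8 := lt_of_lt_of_le hab (min_le_right _ _)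
      have h3 : (0:ℝ) ≤ |b-a| := abs_nonneg _
      have hsum : ∑ l ∈ Finset.range (2 - 0 + 1), Pj (0 + l) a * (b - a) ^ l / (Nat.factorial l) = phi a := by
        simp [Pj, Finset.sum_range_succ]
      rw [hsum]
      show |phi b - phi a| ≤ ε * |b-a|^2
      calc |phi b - phi a| ≤ 8*|b-a|^3 := h1
        _ ≤ ε * |b-a|^2 := by nlinarith
    · refine ⟨1, one_pos, fun a ha b hb hab => ?_⟩
      have : |Pj 1 b - ∑ l ∈ Finset.range (2 - 1 + 1), Pj (1 + l) a * (b - a) ^ l / (Nat.factorial l)| = 0 := by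
        simp [Pj, Finset.sum_range_succ]
      rw [this]; positivity
    · refine ⟨1, one_pos, fun a ha b hb hab => ?_⟩
      have : |Pj 2 b - ∑ l ∈ Finset.range (2 - 2 + 1), Pj (2 + l) a * (b - a) ^ l / (Nat.factorial l)| = 0 := by
        simp [Pj, Finset.sum_range_succ]
      rw [this]; positivity

lemma myK_compact : IsCompact myK :=
  Filter.Tendsto.isCompact_insert_range
    (tendsto_pow_atTop_nhds_zero_of_lt_one (by norm_num) (by norm_num))

lemma c2_facts {f : ℝ → ℝ} (hf : ContDiff ℝ 2 f) :
    Differentiable ℝ f ∧ Differentiable ℝ (deriv f) ∧ Continuous (deriv (deriv f)) := by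
  have h1 : ContDiff ℝ ((1:WithTop ℕ∞)+1) f := by
    have : ((2:ℕ) : WithTop ℕ∞) = (1:WithTop ℕ∞)+1 := by norm_num
    rw [← this]; exact_mod_cast hf
  rw [contDiff_succ_iff_deriv] at h1
  obtain ⟨hd, -, hc⟩ := h1
  rw [show (1:WithTop ℕ∞) = 0+1 by norm_num, contDiff_succ_iff_deriv] at hc
  exact ⟨hd, hc.1, hc.2.2.continuous⟩

lemma est_aux {f : ℝ → ℝ} (hf : ContDiff ℝ 2 f) {s t M : ℝ} (hs0 : 0 ≤ s) (ht1 : t ≤ 1)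
    (hst : s ≤ t) (hfs : f s = 0) (hf's : deriv f s = 0)
    (hM : ∀ x ∈ Icc (0:ℝ) 1, |deriv (deriv f) x| ≤ M) :
    ∀ x ∈ Icc s t, |f x| ≤ M*(t-s)^2 ∧ |deriv f x| ≤ M*(t-s) := by
  obtain ⟨hd, hd1, hc2⟩ := c2_facts hf
  have hM0 : 0 ≤ M := le_trans (abs_nonneg _) (hM 0 (by constructor <;> norm_num))
  have key1 : ∀ x ∈ Icc s t, |deriv f x| ≤ M*(t-s) := by
    intro x hx
    have hfx : ∫ y in s..x, deriv (deriv f) y = deriv f x - deriv f s :=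
      intervalIntegral.integral_deriv_eq_sub (fun y _ => hd1 y) (hc2.intervalIntegrable _ _)
    have hsub : Set.uIcc s x ⊆ Icc (0:ℝ) 1 := by
      rw [Set.uIcc_of_le hx.1]
      exact fun y hy => ⟨le_trans hs0 hy.1, le_trans hy.2 (le_trans hx.2 ht1)⟩
    have hb := intervalIntegral.norm_integral_le_of_norm_le_const
      (C := M) (f := deriv (deriv f)) (a := s) (b := x)
      (fun y hy => hM y (hsub (Set.uIoc_subset_uIcc hy)))
    rw [hfx] at hb
    simp only [Real.norm_eq_abs, hf's, sub_zero] at hb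
    calc |deriv f x| ≤ M * |x - s| := hb
      _ ≤ M * (t-s) := by
          apply mul_le_mul_of_nonneg_left _ hM0
          rw [abs_of_nonneg (by linarith [hx.1])]
          linarith [hx.2]
  intro x hx
  refine ⟨?_, key1 x hx⟩
  have hfx : ∫ y in s..x, deriv f y = f x - f s :=
    intervalIntegral.integral_deriv_eq_sub (fun y _ => hd y)
      ((hd1.continuous.intervalIntegrable _ _))
  have hb := intervalIntegral.norm_integral_le_of_norm_le_const
    (C := M*(t-s)) (f := deriv f) (a := s) (b := x)
    (fun y hy => by
      refine key1 y ?_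
      have := Set.uIoc_subset_uIcc hy
      rw [Set.uIcc_of_le hx.1] at this
      exact ⟨this.1, le_trans this.2 hx.2⟩)
  rw [hfx] at hb
  simp only [Real.norm_eq_abs, hfs, sub_zero] at hb
  calc |f x| ≤ M*(t-s) * |x - s| := hb
    _ ≤ M*(t-s)^2 := by
        rw [abs_of_nonneg (by linarith [hx.1])]
        nlinarith [hx.1, hx.2, hst, mul_nonneg hM0 (by linarith : (0:ℝ) ≤ t - s)]

lemma Aab_GG (a b : ℝ) : Aab 2 Gid Gid Zj a b = 0 := by
  simp only [Aab, taylorPoly_Gid, taylorPolyDeriv_Gid, Zj, Gid]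
  norm_num

lemma Aab_ZG (a b : ℝ) : Aab 2 Zj Gid Zj a b = 0 := by
  simp only [Aab, taylorPoly_Gid, taylorPolyDeriv_Gid, taylorPoly_Zj, taylorPolyDeriv_Zj, Zj, Gid]
  norm_num

lemma Aab_ZGP (a b : ℝ) : Aab 2 Zj Gid Pj a b = phi b - phi a := by
  simp only [Aab, taylorPoly_Gid, taylorPolyDeriv_Gid, taylorPoly_Zj, taylorPolyDeriv_Zj, Zj, Gid, Pj]
  norm_num

lemma Vab_ZG (a b : ℝ) : Vab 2 Zj Gid a b = (b-a)^4 + (b-a)^3 := by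
  simp only [Vab, taylorPolyDeriv_Zj, taylorPolyDeriv_Gid]
  norm_num
  ring

lemma Vab_nonneg (Fi Fj : ℕ → ℝ → ℝ) (a b : ℝ) (hab : a ≤ b) : 0 ≤ Vab 2 Fi Fj a b := by
  unfold Vab
  have h1 : (0:ℝ) ≤ (b-a)^(2*2) := by rw [show 2*2=4 from rfl]; positivity
  have h2 : (0:ℝ) ≤ (b-a)^2 := by positivity
  have h3 : 0 ≤ ∫ x in a..b, (|taylorPolyDeriv 2 Fi a x| + |taylorPolyDeriv 2 Fj a x|) :=
    intervalIntegral.integral_nonneg hab (fun u _ => by positivity)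
  positivity

lemma av20 : ∀ ε > 0, ∃ δ > 0, ∀ a ∈ myK, ∀ b ∈ myK, a < b → b - a < δ →
    |Aab 2 Zj Gid Pj a b| ≤ ε * Vab 2 Zj Gid a b := by
  intro ε hε
  refine ⟨min 1 (ε^2/128), by positivity, fun a ha b hb hab hd => ?_⟩
  rw [Aab_ZGP, Vab_ZG a b]
  have h1 := phi_bound2 ha hb hab
  have hd1 : b - a < 1 := lt_of_lt_of_le hd (min_le_left _ _)
  have hd2 : b - a < ε^2/128 := lt_of_lt_of_le hd (min_le_right _ _)
  have hsq : Real.sqrt (2*(b-a)) ≤ ε/8 := by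
    have h : 2*(b-a) ≤ (ε/8)^2 := by nlinarith
    calc Real.sqrt (2*(b-a)) ≤ Real.sqrt ((ε/8)^2) := Real.sqrt_le_sqrt h
      _ = ε/8 := Real.sqrt_sq (by positivity)
  have h30 : (0:ℝ) ≤ (b-a)^3 := pow_nonneg (by linarith) 3
  have h40 : (0:ℝ) ≤ (b-a)^4 := by positivity
  calc |phi b - phi a| ≤ 8*(b-a)^3*Real.sqrt (2*(b-a)) := h1
    _ ≤ 8*(b-a)^3*(ε/8) := by nlinarith [Real.sqrt_nonneg (2*(b-a))]
    _ ≤ ε*((b-a)^4 + (b-a)^3) := by nlinarith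

lemma noext : ¬ ∃ (g : Fin 3 → ℝ → ℝ) (gij : Fin 3 → Fin 3 → ℝ → ℝ),
    IsCmHorizontal 2 3 g gij ∧ (∀ i, ExtendsJet 2 myK (g i) (myF i)) ∧
    (∀ i j : Fin 3, j < i → ExtendsJet 2 myK (gij i j) (myFij i j)) := by
  rintro ⟨g, gij, ⟨hg, -, horiz⟩, hext, hextij⟩
  have hmem : ∀ n : ℕ, ((1/2:ℝ)^n) ∈ myK := fun n => Set.mem_insert_iff.mpr (Or.inr ⟨n, rfl⟩)
  set w : ℝ → ℝ := g 2 with hw_def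
  set u : ℝ → ℝ := fun x => g 0 x - g 1 x with hu_def
  have hgc : ∀ i : Fin 3, ContDiff ℝ 2 (g i) := fun i => by exact_mod_cast hg i
  have hw : ContDiff ℝ 2 w := hgc 2
  have hu : ContDiff ℝ 2 u := (hgc 0).sub (hgc 1)
  obtain ⟨hwd, hwd1, hwc2⟩ := c2_facts hw
  obtain ⟨hud, hud1, huc2⟩ := c2_facts hu
  obtain ⟨hg0d, hg0d1, -⟩ := c2_facts (hgc 0)
  obtain ⟨hg1d, hg1d1, -⟩ := c2_facts (hgc 1)
  obtain ⟨M1, hM1⟩ := isCompact_Icc.exists_bound_of_continuousOn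
    (s := Icc (0:ℝ) 1) hwc2.continuousOn
  obtain ⟨M2, hM2⟩ := isCompact_Icc.exists_bound_of_continuousOn
    (s := Icc (0:ℝ) 1) huc2.continuousOn
  set M : ℝ := max M1 M2 with hM_def
  have hMw : ∀ x ∈ Icc (0:ℝ) 1, |deriv (deriv w) x| ≤ M :=
    fun x hx => le_trans (hM1 x hx) (le_max_left _ _)
  have hMu : ∀ x ∈ Icc (0:ℝ) 1, |deriv (deriv u) x| ≤ M :=
    fun x hx => le_trans (hM2 x hx) (le_max_right _ _)
  have hM0 : 0 ≤ M := le_trans (abs_nonneg _) (hMw 0 (by constructor <;> norm_num))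
  have hwval : ∀ x ∈ myK, w x = 0 ∧ deriv w x = 0 := by
    intro x hx
    have h0 := hext 2 0 (by norm_num) x hx
    have h1 := hext 2 1 (by norm_num) x hx
    rw [iteratedDeriv_zero] at h0
    rw [iteratedDeriv_one] at h1
    simp [myF, Zj] at h0 h1
    exact ⟨h0, h1⟩
  have huval : ∀ x ∈ myK, u x = 0 ∧ deriv u x = 0 := by
    intro x hx
    have h00 := hext 0 0 (by norm_num) x hx
    have h01 := hext 0 1 (by norm_num) x hx
    have h10 := hext 1 0 (by norm_num) x hx
    have h11 := hext 1 1 (by norm_num) x hx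
    rw [iteratedDeriv_zero] at h00 h10
    rw [iteratedDeriv_one] at h01 h11
    simp [myF, Gid] at h00 h01 h10 h11
    constructor
    · simp [hu_def, h00, h10]
    · rw [hu_def]
      rw [deriv_fun_sub (hg0d x) (hg1d x)]
      rw [h01, h11]; ring
  have hgijval : ∀ x ∈ myK, gij 2 0 x = phi x ∧ gij 2 1 x = 0 := by
    intro x hx
    have h20 := hextij 2 0 (by decide) 0 (by norm_num) x hx
    have h21 := hextij 2 1 (by decide) 0 (by norm_num) x hx
    rw [iteratedDeriv_zero] at h20 h21
    simp [myFij, Pj, Zj] at h20 h21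
    exact ⟨h20, h21⟩
  have key : ∀ k : ℕ, phi ((1/2:ℝ)^k) - phi ((1/2:ℝ)^(k+1)) ≤ M^2 * ((1/2:ℝ)^k/2)^4 := by
    intro k
    set t : ℝ := (1/2:ℝ)^k with ht_def
    set s : ℝ := (1/2:ℝ)^(k+1) with hs_def
    have hst2 : s = t/2 := by rw [hs_def, ht_def, pow_succ]; ring
    have ht0 : 0 < t := pow_pos (by norm_num) k
    have hs0 : 0 < s := pow_pos (by norm_num) (k+1)
    have hst : s ≤ t := by rw [hst2]; linarith
    have ht1 : t ≤ 1 := pow_le_one₀ (by norm_num) (by norm_num)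
    have hsmem := hmem (k+1)
    have htmem := hmem k
    have hestw := est_aux hw hs0.le ht1 hst (hwval s hsmem).1 (hwval s hsmem).2 hMw
    have hestu := est_aux hu hs0.le ht1 hst (huval s hsmem).1 (huval s hsmem).2 hMu
    have h20 := horiz 2 0 (by decide) s t hst
    have h21 := horiz 2 1 (by decide) s t hst
    rw [(hgijval t htmem).1, (hgijval s hsmem).1] at h20
    rw [(hgijval t htmem).2, (hgijval s hsmem).2] at h21
    have hint0 : IntervalIntegrable (fun x => g 2 x * deriv (g 0) x - deriv (g 2) x * g 0 x)
        volume s t :=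
      (((hwd.continuous.mul hg0d1.continuous)).sub
        ((hwd1.continuous.mul hg0d.continuous))).intervalIntegrable _ _
    have hint1 : IntervalIntegrable (fun x => g 2 x * deriv (g 1) x - deriv (g 2) x * g 1 x)
        volume s t :=
      (((hwd.continuous.mul hg1d1.continuous)).sub
        ((hwd1.continuous.mul hg1d.continuous))).intervalIntegrable _ _
    have hcomb : phi t - phi s
        = (1/2) * ∫ x in s..t, (w x * deriv u x - deriv w x * u x) := by
      have hsub : (∫ x in s..t, (g 2 x * deriv (g 0) x - deriv (g 2) x * g 0 x))
          - ∫ x in s..t, (g 2 x * deriv (g 1) x - deriv (g 2) x * g 1 x)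
          = ∫ x in s..t, (w x * deriv u x - deriv w x * u x) := by
        rw [← intervalIntegral.integral_sub hint0 hint1]
        apply intervalIntegral.integral_congr
        intro x _
        have : deriv u x = deriv (g 0) x - deriv (g 1) x := by
          rw [hu_def, deriv_fun_sub (hg0d x) (hg1d x)]
        simp only [this]; simp only [hw_def, hu_def]
        ring
      have hc : phi t - phi s - 0 = (1/2) * ((∫ x in s..t, (g 2 x * deriv (g 0) x - deriv (g 2) x * g 0 x))
          - ∫ x in s..t, (g 2 x * deriv (g 1) x - deriv (g 2) x * g 1 x)) := by
        rw [mul_sub]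
        rw [← h20, ← h21]
        ring
      rw [← hsub]
      linarith [hc]
    have hbnd := intervalIntegral.norm_integral_le_of_norm_le_const
      (C := 2*M^2*(t-s)^3) (f := fun x => w x * deriv u x - deriv w x * u x) (a := s) (b := t)
      (fun y hy => by
        have hy' : y ∈ Icc s t := by
          have := Set.uIoc_subset_uIcc hy
          rw [Set.uIcc_of_le hst] at this
          exact this
        obtain ⟨hw1, hw2⟩ := hestw y hy'
        obtain ⟨hu1, hu2⟩ := hestu y hy'
        have hts0 : 0 ≤ t - s := by linarith
        simp only [Real.norm_eq_abs]
        calc |w y * deriv u y - deriv w y * u y|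
            ≤ |w y * deriv u y| + |deriv w y * u y| := abs_sub _ _
          _ = |w y| * |deriv u y| + |deriv w y| * |u y| := by rw [abs_mul, abs_mul]
          _ ≤ M*(t-s)^2 * (M*(t-s)) + M*(t-s) * (M*(t-s)^2) := by
              apply add_le_add <;>
                exact mul_le_mul (by assumption) (by assumption) (abs_nonneg _)
                  (by positivity)
          _ = 2*M^2*(t-s)^3 := by ring)
    rw [Real.norm_eq_abs] at hbnd
    have h4 : |phi t - phi s| ≤ (1/2) * (2*M^2*(t-s)^3 * |t-s|) := by
      rw [hcomb, abs_mul]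
      have : |(1/2:ℝ)| = 1/2 := by norm_num
      rw [this]
      exact mul_le_mul_of_nonneg_left hbnd (by norm_num)
    have hts : t - s = t/2 := by rw [hst2]; ring
    have habs : |t - s| = t/2 := by rw [hts, abs_of_pos (by linarith)]
    calc phi t - phi s ≤ |phi t - phi s| := le_abs_self _
      _ ≤ (1/2) * (2*M^2*(t-s)^3 * |t-s|) := h4
      _ = M^2 * (t/2)^4 := by rw [habs, hts]; ring
  have low : ∀ k : ℕ, (7/8) * ((1/2:ℝ)^k)^3 * Real.sqrt ((1/2:ℝ)^k)
      ≤ phi ((1/2:ℝ)^k) - phi ((1/2:ℝ)^(k+1)) := by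
    intro k
    set t : ℝ := (1/2:ℝ)^k with ht_def
    have ht0 : 0 < t := pow_pos (by norm_num) k
    have hst2 : (1/2:ℝ)^(k+1) = t/2 := by rw [ht_def, pow_succ]; ring
    rw [hst2]
    unfold phi
    have hsq : Real.sqrt (t/2) ≤ Real.sqrt t := Real.sqrt_le_sqrt (by linarith)
    have hsq0 : 0 ≤ Real.sqrt (t/2) := Real.sqrt_nonneg _
    nlinarith [pow_pos ht0 3, Real.sqrt_nonneg t]
  obtain ⟨k, hk⟩ := exists_pow_lt_of_lt_one
    (show (0:ℝ) < (14/(M^2+1))^2 by positivity) (show (1/2:ℝ) < 1 by norm_num)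
  set t : ℝ := (1/2:ℝ)^k with ht_def
  have ht0 : 0 < t := pow_pos (by norm_num) k
  have hsqt0 : 0 < Real.sqrt t := Real.sqrt_pos.mpr ht0
  have h1 : (7/8) * t^3 * Real.sqrt t ≤ M^2 * (t/2)^4 := le_trans (low k) (key k)
  have h2 : (14:ℝ) ≤ M^2 * Real.sqrt t := by
    have ht4 : t^4 = (Real.sqrt t)^2 * t^3 := by
      rw [Real.sq_sqrt ht0.le]; ring
    have h3 : 14 * t^3 * Real.sqrt t ≤ M^2 * (Real.sqrt t)^2 * t^3 := by
      nlinarith [h1, ht4]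
    have h5 : 14 * Real.sqrt t ≤ M^2 * (Real.sqrt t)^2 := by
      have h6 := mul_le_mul_of_nonneg_right h3 (le_of_lt (inv_pos.mpr (pow_pos ht0 3)))
      calc 14 * Real.sqrt t = 14 * t^3 * Real.sqrt t * (t^3)⁻¹ := by
            field_simp
        _ ≤ M^2 * (Real.sqrt t)^2 * t^3 * (t^3)⁻¹ := h6
        _ = M^2 * (Real.sqrt t)^2 := by field_simp
    have h7 := mul_le_mul_of_nonneg_right h5 (le_of_lt (inv_pos.mpr hsqt0))
    calc (14:ℝ) = 14 * Real.sqrt t * (Real.sqrt t)⁻¹ := by field_simp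
      _ ≤ M^2 * (Real.sqrt t)^2 * (Real.sqrt t)⁻¹ := h7
      _ = M^2 * Real.sqrt t := by
          have hss : Real.sqrt t^2 * (Real.sqrt t)⁻¹ = Real.sqrt t := by
            rw [sq, mul_assoc, mul_inv_cancel₀ (ne_of_gt hsqt0), mul_one]
          rw [mul_assoc, hss]
  have h8 : Real.sqrt t < 14/(M^2+1) := by
    rw [show (14:ℝ)/(M^2+1) = Real.sqrt ((14/(M^2+1))^2) by
      rw [Real.sqrt_sq (by positivity)]]
    exact Real.sqrt_lt_sqrt ht0.le hk
  have h9 : M^2 * Real.sqrt t < 14 := by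
    calc M^2 * Real.sqrt t ≤ (M^2+1) * Real.sqrt t := by nlinarith [hsqt0.le]
      _ < (M^2+1) * (14/(M^2+1)) := by
          apply mul_lt_mul_of_pos_left h8 (by positivity)
      _ = 14 := by field_simp
  linarith

/-- There exist a compact set `K ⊆ ℝ` and jets of order 2 on `K` that are Whitney fields
of class `C²`, satisfy the `𝒫^k` compatibility conditions and the component-wise `A/V`
condition, but admit no `C²` horizontal extension in `𝔾₃`. -/
theorem stmt4 :
    ∃ K : Set ℝ, IsCompact K ∧
    ∃ (F : Fin 3 → ℕ → ℝ → ℝ) (Fij : Fin 3 → Fin 3 → ℕ → ℝ → ℝ),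
      (∀ i, IsWhitneyField 2 K (F i)) ∧
      (∀ i j : Fin 3, j < i → IsWhitneyField 2 K (Fij i j)) ∧
      (∀ k : ℕ, 1 ≤ k → k ≤ 2 → ∀ t ∈ K, ∀ i j : Fin 3, j < i →
        Fij i j k t = pScript k (fun l => F i l t) (fun l => F j l t)) ∧
      (∀ i j : Fin 3, j < i → ∀ ε > 0, ∃ δ > 0, ∀ a ∈ K, ∀ b ∈ K, a < b → b - a < δ →
        |Aab 2 (F i) (F j) (Fij i j) a b| ≤ ε * Vab 2 (F i) (F j) a b) ∧
      ¬ ∃ (g : Fin 3 → ℝ → ℝ) (gij : Fin 3 → Fin 3 → ℝ → ℝ),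
          IsCmHorizontal 2 3 g gij ∧
          (∀ i, ExtendsJet 2 K (g i) (F i)) ∧
          (∀ i j : Fin 3, j < i → ExtendsJet 2 K (gij i j) (Fij i j)) := by
  refine ⟨myK, myK_compact, myF, myFij, ?_, ?_, ?_, ?_, noext⟩
  · intro i
    fin_cases i
    · exact whitney_Gid
    · exact whitney_Gid
    · exact whitney_Zj
  · intro i j hij
    fin_cases i <;> fin_cases j <;>
      first
      | exact absurd hij (by decide)
      | exact whitney_Zj
      | exact whitney_Pj
  · intro k hk1 hk2 t ht i j hij
    interval_cases k <;> fin_cases i <;> fin_cases j <;>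
      first
      | exact absurd hij (by decide)
      | (simp [myFij, myF, pScript, Finset.sum_range_succ, Gid, Zj, Pj]; try ring)
  · intro i j hij ε hε
    fin_cases i <;> fin_cases j <;>
      first
      | exact absurd hij (by decide)
      | (show ∃ δ > 0, ∀ a ∈ myK, ∀ b ∈ myK, a < b → b - a < δ →
              |Aab 2 Gid Gid Zj a b| ≤ ε * Vab 2 Gid Gid a b
         refine ⟨1, one_pos, fun a ha b hb hab hd => ?_⟩
         rw [Aab_GG]
         simpa using mul_nonneg hε.le (Vab_nonneg Gid Gid a b hab.le))
      | (show ∃ δ > 0, ∀ a ∈ myK, ∀ b ∈ myK, a < b → b - a < δ →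
              |Aab 2 Zj Gid Zj a b| ≤ ε * Vab 2 Zj Gid a b
         refine ⟨1, one_pos, fun a ha b hb hab hd => ?_⟩
         rw [Aab_ZG]
         simpa using mul_nonneg hε.le (Vab_nonneg Zj Gid a b hab.le))
      | exact av20 ε hε

end
end

section
/- Let c_n := 1 − 2^{−n}, d_n := 1 − (3/4)2^{−n} and K := (⋃_{n=1}^∞ [c_n, d_n]) ∪ {1}. Define jets of order 2 on K by F_1 := (t ↦ t, t ↦ 1, t ↦ 0), F_2 := (0, 0, 0), F_3 := (t ↦ −t, t ↦ −1, t ↦ 0), F_{21} := (t ↦ Σ_{n=1}^∞ 10^{−n} 𝟙_{[c_n,d_n]}(t), t ↦ 0, t ↦ 0), F_{31} := (0,0,0), F_{32} := (0,0,0). Then there is no C² horizontal curve γ : ℝ → 𝔾_3 such that D^kγ_i|_K = F_i^k for all 0 ≤ k ≤ 2, 1 ≤ i ≤ 3, and D^kγ_{ij}|_K = F_{ij}^k for all 0 ≤ k ≤ 2, 1 ≤ j < i ≤ 3. -/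
open MeasureTheory Set Filter

noncomputable section

/-- `c_n = 1 - 2^{-n}`. -/
def cSeq (n : ℕ) : ℝ := 1 - (1 / 2) ^ n

/-- `d_n = 1 - (3/4)·2^{-n}`. -/
def dSeq (n : ℕ) : ℝ := 1 - (3 / 4) * (1 / 2) ^ n

/-- The compact set `K = (⋃_{n≥1} [c_n, d_n]) ∪ {1}`. -/
def Kex : Set ℝ := (⋃ n : ℕ, Icc (cSeq (n + 1)) (dSeq (n + 1))) ∪ {1}

/-- The jet `F₁ = (t, 1, 0)`. -/
def F1ex : ℕ → ℝ → ℝ := fun k t => if k = 0 then t else if k = 1 then 1 else 0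

/-- The jet `F₂ = (0, 0, 0)`. -/
def F2ex : ℕ → ℝ → ℝ := fun _ _ => 0

/-- The jet `F₃ = (−t, −1, 0)`. -/
def F3ex : ℕ → ℝ → ℝ := fun k t => if k = 0 then -t else if k = 1 then -1 else 0

/-- The jet `F₂₁ = (∑_{n≥1} 10^{-n} 𝟙_{[c_n,d_n]}, 0, 0)`. -/
def F21ex : ℕ → ℝ → ℝ := fun k t =>
  if k = 0 then
    ∑' n : ℕ, Set.indicator (Icc (cSeq (n + 1)) (dSeq (n + 1)))
      (fun _ => ((1 : ℝ) / 10) ^ (n + 1)) t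
  else 0

/-- The horizontal jets `(F₁, F₂, F₃)`. -/
def Fex : Fin 3 → ℕ → ℝ → ℝ := ![F1ex, F2ex, F3ex]

/-- The vertical jets: `F_{21} = F21ex`, `F_{31} = F_{32} = (0,0,0)`. -/
def Fijex : Fin 3 → Fin 3 → ℕ → ℝ → ℝ := fun i j =>
  if i = 1 ∧ j = 0 then F21ex else fun _ _ => 0

-- AUX LEMMAS (to be placed above stmt5)

lemma cSeq_mono' : Monotone cSeq := by
  intro m n h
  simp only [cSeq, sub_le_sub_iff_left]
  exact pow_le_pow_of_le_one (by norm_num) (by norm_num) h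

lemma cSeq_lt_dSeq' (n : ℕ) : cSeq n < dSeq n := by
  simp only [cSeq, dSeq, sub_lt_sub_iff_left]
  have : (0:ℝ) < (1/2)^n := by positivity
  nlinarith

lemma dSeq_lt_cSeq_succ' (n : ℕ) : dSeq n < cSeq (n + 1) := by
  simp only [cSeq, dSeq, sub_lt_sub_iff_left, pow_succ]
  have : (0:ℝ) < (1/2)^n := by positivity
  nlinarith

lemma mem_Kex_of_mem' {n : ℕ} {t : ℝ} (h : t ∈ Icc (cSeq (n+1)) (dSeq (n+1))) : t ∈ Kex :=
  Or.inl (mem_iUnion.mpr ⟨n, h⟩)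

lemma F21_eval' {N : ℕ} {t : ℝ} (ht : t ∈ Icc (cSeq (N+1)) (dSeq (N+1))) :
    F21ex 0 t = (1/10:ℝ)^(N+1) := by
  have key : ∀ m : ℕ, m ≠ N →
      Set.indicator (Icc (cSeq (m + 1)) (dSeq (m + 1))) (fun _ => ((1:ℝ)/10)^(m+1)) t = 0 := by
    intro m hm
    apply Set.indicator_of_notMem
    rcases lt_or_gt_of_ne hm with h | h
    · intro hmem
      have h1 : dSeq (m+1) < cSeq (m+2) := dSeq_lt_cSeq_succ' _
      have h2 : cSeq (m+2) ≤ cSeq (N+1) := cSeq_mono' (by omega)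
      have := hmem.2
      linarith [ht.1]
    · intro hmem
      have h1 : dSeq (N+1) < cSeq (N+2) := dSeq_lt_cSeq_succ' _
      have h2 : cSeq (N+2) ≤ cSeq (m+1) := cSeq_mono' (by omega)
      have := hmem.1
      linarith [ht.2]
  simp only [F21ex, if_pos rfl]
  rw [tsum_eq_single N key, Set.indicator_of_mem ht]
  simp

lemma abs_le_of_deriv_bound' {f : ℝ → ℝ} {a b M : ℝ}
    (hf : Differentiable ℝ f) (hfa : f a = 0)
    (hM : ∀ x ∈ Icc a b, |deriv f x| ≤ M) :
    ∀ x ∈ Icc a b, |f x| ≤ M * (b - a) := by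
  intro x hx
  have hMnn : 0 ≤ M := le_trans (abs_nonneg _) (hM x hx)
  have haI : a ∈ Icc a b := ⟨le_refl _, hx.1.trans hx.2⟩
  have := Convex.norm_image_sub_le_of_norm_deriv_le (f := f) (s := Icc a b)
    (fun y _ => hf y) (fun y hy => by rw [Real.norm_eq_abs]; exact hM y hy)
    (convex_Icc a b) haI hx
  rw [Real.norm_eq_abs, Real.norm_eq_abs, hfa, sub_zero] at this
  calc |f x| ≤ M * |x - a| := this
    _ ≤ M * (b - a) := by
        apply mul_le_mul_of_nonneg_left _ hMnn
        rw [abs_of_nonneg (by linarith [hx.1])]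
        linarith [hx.2]

lemma contDiff_one_deriv' {f : ℝ → ℝ} (h : ContDiff ℝ 2 f) : ContDiff ℝ 1 (deriv f) :=
  ((contDiff_succ_iff_deriv (n := 1) (f := f)).mp (by norm_num; exact_mod_cast h)).2.2

/-- The explicit jets on `K` admit no `C²` horizontal extension in `𝔾₃`. -/
theorem stmt5 :
    ¬ ∃ (g : Fin 3 → ℝ → ℝ) (gij : Fin 3 → Fin 3 → ℝ → ℝ),
        IsCmHorizontal 2 3 g gij ∧
        (∀ i, ExtendsJet 2 Kex (g i) (Fex i)) ∧
        (∀ i j : Fin 3, j < i → ExtendsJet 2 Kex (gij i j) (Fijex i j)) := by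
  rintro ⟨g, gij, ⟨hsm, hsmij, hhor⟩, hext, hextij⟩
  -- basic smoothness
  have hsm2 : ∀ i : Fin 3, ContDiff ℝ 2 (g i) := fun i => by exact_mod_cast hsm i
  have hd : ∀ i : Fin 3, Differentiable ℝ (g i) := fun i => (hsm2 i).differentiable (by norm_num)
  have hc : ∀ i : Fin 3, Continuous (g i) := fun i => (hsm2 i).continuous
  have hcd : ∀ i : Fin 3, Continuous (deriv (g i)) :=
    fun i => (hsm2 i).continuous_deriv (by norm_num)
  have hdd : ∀ i : Fin 3, Differentiable ℝ (deriv (g i)) :=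
    fun i => (contDiff_one_deriv' (hsm2 i)).differentiable (by norm_num)
  have hcdd : ∀ i : Fin 3, Continuous (deriv (deriv (g i))) :=
    fun i => (contDiff_one_deriv' (hsm2 i)).continuous_deriv le_rfl
  set e : ℝ → ℝ := fun x => g 2 x + g 0 x with he_def
  have he : ContDiff ℝ 2 e := (hsm2 2).add (hsm2 0)
  have hde : ∀ x, deriv e x = deriv (g 2) x + deriv (g 0) x := fun x =>
    deriv_add ((hd 2) x) ((hd 0) x)
  have hderiv_e_eq : deriv e = fun x => deriv (g 2) x + deriv (g 0) x := funext hde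
  have hce : Continuous e := he.continuous
  have hcde : Continuous (deriv e) := he.continuous_deriv (by norm_num)
  have hdde : Differentiable ℝ (deriv e) := (contDiff_one_deriv' he).differentiable (by norm_num)
  have hcdde : Continuous (deriv (deriv e)) := (contDiff_one_deriv' he).continuous_deriv le_rfl
  -- bounds for second derivatives on [0,1]
  obtain ⟨M1, hM1⟩ := (isCompact_Icc (a := (0:ℝ)) (b := 1)).exists_bound_of_continuousOn
    (hcdd 1).continuousOn
  obtain ⟨M2, hM2⟩ := (isCompact_Icc (a := (0:ℝ)) (b := 1)).exists_bound_of_continuousOn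
    hcdde.continuousOn
  have hM1nn : 0 ≤ M1 := le_trans (norm_nonneg _) (hM1 0 (by norm_num))
  have hM2nn : 0 ≤ M2 := le_trans (norm_nonneg _) (hM2 0 (by norm_num))
  -- jet values on K
  have hg0v : ∀ x ∈ Kex, g 0 x = x := by
    intro x hx
    have := hext 0 0 (by norm_num) x hx
    simpa [Fex, F1ex] using this
  have hg0d : ∀ x ∈ Kex, deriv (g 0) x = 1 := by
    intro x hx
    have := hext 0 1 (by norm_num) x hx
    simpa [Fex, F1ex, iteratedDeriv_one] using this
  have hg1v : ∀ x ∈ Kex, g 1 x = 0 := by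
    intro x hx
    have := hext 1 0 (by norm_num) x hx
    simpa [Fex, F2ex] using this
  have hg1d : ∀ x ∈ Kex, deriv (g 1) x = 0 := by
    intro x hx
    have := hext 1 1 (by norm_num) x hx
    simpa [Fex, F2ex, iteratedDeriv_one] using this
  have hg2v : ∀ x ∈ Kex, g 2 x = -x := by
    intro x hx
    have := hext 2 0 (by norm_num) x hx
    simpa [Fex, F3ex] using this
  have hg2d : ∀ x ∈ Kex, deriv (g 2) x = -1 := by
    intro x hx
    have := hext 2 1 (by norm_num) x hx
    simpa [Fex, F3ex, iteratedDeriv_one] using this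
  have hgij10 : ∀ x ∈ Kex, gij 1 0 x = F21ex 0 x := by
    intro x hx
    have := hextij 1 0 (by decide) 0 (by norm_num) x hx
    simpa [Fijex] using this
  have hgij21 : ∀ x ∈ Kex, gij 2 1 x = 0 := by
    intro x hx
    have := hextij 2 1 (by decide) 0 (by norm_num) x hx
    simpa [Fijex] using this
  -- the key inequality for each n
  have key : ∀ n : ℕ, (9/5) * (1/10:ℝ)^(n+1) ≤ 2*M1*M2 * ((1/2:ℝ)^(n+3))^4 := by
    intro n
    set a := dSeq (n+1) with ha_def
    set b := cSeq (n+2) with hb_def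
    have hab : a < b := dSeq_lt_cSeq_succ' (n+1)
    have haicc : a ∈ Icc (cSeq (n+1)) (dSeq (n+1)) := ⟨(cSeq_lt_dSeq' _).le, le_refl _⟩
    have hbicc : b ∈ Icc (cSeq (n+2)) (dSeq (n+2)) := ⟨le_refl _, (cSeq_lt_dSeq' _).le⟩
    have haK : a ∈ Kex := mem_Kex_of_mem' haicc
    have hbK : b ∈ Kex := mem_Kex_of_mem' hbicc
    have hba : b - a = (1/2:ℝ)^(n+3) := by
      simp only [ha_def, hb_def, cSeq, dSeq, pow_succ]
      ring
    have hsub01 : Icc a b ⊆ Icc (0:ℝ) 1 := by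
      apply Icc_subset_Icc
      · simp only [ha_def, dSeq]
        have h1 : (3/4:ℝ) * (1/2)^(n+1) ≤ 3/4 * 1 := by
          apply mul_le_mul_of_nonneg_left _ (by norm_num)
          exact pow_le_one₀ (by norm_num) (by norm_num)
        linarith
      · simp only [hb_def, cSeq]
        have : (0:ℝ) ≤ (1/2)^(n+2) := by positivity
        linarith
    set h := b - a with hh_def
    have hh_pos : 0 < h := by linarith
    -- Taylor bounds on [a,b]
    have hea : e a = 0 := by
      simp only [he_def]
      rw [hg2v a haK, hg0v a haK]; ring
    have hdea : deriv e a = 0 := by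
      rw [hde a, hg2d a haK, hg0d a haK]; ring
    have hg1a : g 1 a = 0 := hg1v a haK
    have hdg1a : deriv (g 1) a = 0 := hg1d a haK
    have bd_dg1 : ∀ x ∈ Icc a b, |deriv (g 1) x| ≤ M1 * h := by
      apply abs_le_of_deriv_bound' (hdd 1) hdg1a
      intro x hx
      have := hM1 x (hsub01 hx)
      rwa [Real.norm_eq_abs] at this
    have bd_g1 : ∀ x ∈ Icc a b, |g 1 x| ≤ (M1 * h) * h :=
      abs_le_of_deriv_bound' (hd 1) hg1a bd_dg1
    have bd_de : ∀ x ∈ Icc a b, |deriv e x| ≤ M2 * h := by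
      apply abs_le_of_deriv_bound' hdde hdea
      intro x hx
      have := hM2 x (hsub01 hx)
      rwa [Real.norm_eq_abs] at this
    have bd_e : ∀ x ∈ Icc a b, |e x| ≤ (M2 * h) * h :=
      abs_le_of_deriv_bound' (he.differentiable (by norm_num)) hea bd_de
    -- integrals
    have int1 : IntervalIntegrable (fun x => e x * deriv (g 1) x - deriv e x * g 1 x)
        volume a b :=
      (((hce.mul (hcd 1)).sub (hcde.mul (hc 1)))).intervalIntegrable a b
    have int2 : IntervalIntegrable (fun x => g 1 x * deriv (g 0) x - deriv (g 1) x * g 0 x)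
        volume a b :=
      ((((hc 1).mul (hcd 0)).sub ((hcd 1).mul (hc 0)))).intervalIntegrable a b
    set Ie := ∫ x in a..b, (e x * deriv (g 1) x - deriv e x * g 1 x) with hIe_def
    set I10 := ∫ x in a..b, (g 1 x * deriv (g 0) x - deriv (g 1) x * g 0 x) with hI10_def
    -- horizontality for (2,1)
    have H21 := hhor 2 1 (by decide) a b hab.le
    have H10 := hhor 1 0 (by decide) a b hab.le
    have H21L : gij 2 1 b - gij 2 1 a = 0 := by
      rw [hgij21 a haK, hgij21 b hbK]; ring
    have H10L : gij 1 0 b - gij 1 0 a = (1/10:ℝ)^(n+2) - (1/10:ℝ)^(n+1) := by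
      rw [hgij10 a haK, hgij10 b hbK, F21_eval' haicc, F21_eval' hbicc]
    -- integrand identity
    have Isplit : (∫ x in a..b, (g 2 x * deriv (g 1) x - deriv (g 2) x * g 1 x))
        = Ie + I10 := by
      rw [hIe_def, hI10_def, ← intervalIntegral.integral_add int1 int2]
      apply intervalIntegral.integral_congr
      intro x _
      dsimp only
      rw [hde x]
      simp only [he_def]
      ring
    have E21 : (0:ℝ) = (1/2) * (Ie + I10) := by
      rw [← Isplit, ← H21]; exact H21L.symm
    have E10 : (1/10:ℝ)^(n+2) - (1/10:ℝ)^(n+1) = (1/2) * I10 := by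
      rw [← H10L]; exact H10
    have hIe_val : Ie = (9/5) * (1/10:ℝ)^(n+1) := by
      have hp : (1/10:ℝ)^(n+2) = (1/10) * (1/10:ℝ)^(n+1) := by
        rw [pow_succ]; ring
      rw [hp] at E10
      linarith
    -- bound on Ie
    have bd_int : ∀ x ∈ Set.uIoc a b,
        ‖e x * deriv (g 1) x - deriv e x * g 1 x‖ ≤ 2*M1*M2*h^3 := by
      intro x hx
      have hx' : x ∈ Icc a b := by
        rw [Set.uIoc_of_le hab.le] at hx
        exact ⟨hx.1.le, hx.2⟩
      rw [Real.norm_eq_abs]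
      have h1 := bd_e x hx'
      have h2 := bd_dg1 x hx'
      have h3 := bd_de x hx'
      have h4 := bd_g1 x hx'
      have habs : |e x * deriv (g 1) x - deriv e x * g 1 x|
          ≤ |e x| * |deriv (g 1) x| + |deriv e x| * |g 1 x| := by
        calc |e x * deriv (g 1) x - deriv e x * g 1 x|
            ≤ |e x * deriv (g 1) x| + |deriv e x * g 1 x| := abs_sub _ _
          _ = |e x| * |deriv (g 1) x| + |deriv e x| * |g 1 x| := by
              rw [abs_mul, abs_mul]
      have t1 : |e x| * |deriv (g 1) x| ≤ (M2*h*h) * (M1*h) := by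
        apply mul_le_mul h1 h2 (abs_nonneg _)
        positivity
      have t2 : |deriv e x| * |g 1 x| ≤ (M2*h) * (M1*h*h) := by
        apply mul_le_mul h3 h4 (abs_nonneg _)
        positivity
      calc |e x * deriv (g 1) x - deriv e x * g 1 x|
          ≤ (M2*h*h) * (M1*h) + (M2*h) * (M1*h*h) := by linarith
        _ = 2*M1*M2*h^3 := by ring
    have bd_Ie : |Ie| ≤ 2*M1*M2*h^3 * |b - a| := by
      rw [hIe_def, ← Real.norm_eq_abs]
      exact intervalIntegral.norm_integral_le_of_norm_le_const bd_int
    have : (9/5) * (1/10:ℝ)^(n+1) ≤ 2*M1*M2*h^3 * h := by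
      calc (9/5) * (1/10:ℝ)^(n+1) = Ie := hIe_val.symm
        _ ≤ |Ie| := le_abs_self _
        _ ≤ 2*M1*M2*h^3 * |b - a| := bd_Ie
        _ = 2*M1*M2*h^3 * h := by rw [abs_of_pos (by linarith : (0:ℝ) < b - a)]
    calc (9/5) * (1/10:ℝ)^(n+1) ≤ 2*M1*M2*h^3 * h := this
      _ = 2*M1*M2 * h^4 := by ring
      _ = 2*M1*M2 * ((1/2:ℝ)^(n+3))^4 := by rw [hba]
  -- derive contradiction
  have key2 : ∀ n : ℕ, (9/50) * (8/5:ℝ)^n ≤ 2*M1*M2/4096 := by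
    intro n
    have hk := key n
    have e1 : ((1/2:ℝ)^(n+3))^4 = (1/16:ℝ)^n * (1/4096) := by
      rw [← pow_mul, show (n+3)*4 = 4*n + 12 by ring, pow_add, pow_mul]
      norm_num
    have e2 : (9/5:ℝ)*(1/10)^(n+1) = (9/50)*(8/5)^n*(1/16)^n := by
      rw [pow_succ, show ((1:ℝ)/10) = (8/5)*(1/16) by norm_num, mul_pow]
      ring
    rw [e2, e1] at hk
    have hpos : (0:ℝ) < (1/16)^n := by positivity
    have := (div_le_div_iff_of_pos_right hpos).mpr hk
    calc (9/50) * (8/5:ℝ)^n = ((9/50)*(8/5)^n*(1/16)^n)/(1/16)^n := by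
          field_simp
      _ ≤ (2*M1*M2*((1/16:ℝ)^n * (1/4096)))/(1/16)^n := this
      _ = 2*M1*M2/4096 := by field_simp
  obtain ⟨n, hn⟩ := pow_unbounded_of_one_lt ((2*M1*M2/4096)*(50/9) : ℝ)
    (by norm_num : (1:ℝ) < 8/5)
  have := key2 n
  linarith

end
end

section
/- Let c_n := 1 − 2^{−n}, d_n := 1 − (3/4)2^{−n} and K := (⋃_{n=1}^∞ [c_n, d_n]) ∪ {1}. Define jets of order 2 on K by F_1 := (t ↦ t, t ↦ 1, t ↦ 0), F_2 := (0,0,0), F_3 := (t ↦ −t, t ↦ −1, t ↦ 0), F_{21} := (t ↦ Σ_{n=1}^∞ 10^{−n} 𝟙_{[c_n,d_n]}(t), t ↦ 0, t ↦ 0), F_{31} := (0,0,0), F_{32} := (0,0,0). Then: (1) all six jets are Whitney fields of class C² on K; (2) for every 1 ≤ k ≤ 2, t ∈ K and 1 ≤ j < i ≤ 3, F_{ij}^k(t) = 𝒫^k(F_i^0(t), F_j^0(t), …, F_i^k(t), F_j^k(t)); (3) for all 1 ≤ j < i ≤ 3, A_{ij}(a,b)/V_{ij}(a,b) → 0 uniformly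 as (b−a) ↘ 0 with a, b ∈ K. -/
open MeasureTheory Set Filter

noncomputable section

-- taylorPoly computations
lemma tp1 (a : ℝ) : taylorPoly 2 F1ex a = fun x => x := by
  funext x
  simp [taylorPoly, F1ex, Finset.sum_range_succ, Nat.factorial]

lemma tp2 (a : ℝ) : taylorPoly 2 F2ex a = fun _ => (0:ℝ) := by
  funext x
  simp [taylorPoly, F2ex]

lemma tp3 (a : ℝ) : taylorPoly 2 F3ex a = fun x => -x := by
  funext x
  simp [taylorPoly, F3ex, Finset.sum_range_succ, Nat.factorial]
  ring

lemma tpd1 (a : ℝ) : taylorPolyDeriv 2 F1ex a = fun _ => (1:ℝ) := by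
  rw [taylorPolyDeriv, tp1]
  funext x
  simp

lemma tpd2 (a : ℝ) : taylorPolyDeriv 2 F2ex a = fun _ => (0:ℝ) := by
  rw [taylorPolyDeriv, tp2]
  funext x
  simp

lemma tpd3 (a : ℝ) : taylorPolyDeriv 2 F3ex a = fun _ => (-1:ℝ) := by
  rw [taylorPolyDeriv, tp3]
  funext x
  simp [deriv_neg]

lemma Fex0 : Fex 0 = F1ex := rfl
lemma Fex1 : Fex 1 = F2ex := rfl
lemma Fex2 : Fex 2 = F3ex := rfl

lemma A10 (a b : ℝ) : Aab 2 F2ex F1ex F21ex a b = F21ex 0 b - F21ex 0 a := by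
  simp [Aab, tp1, tp2, tpd1, tpd2, F1ex, F2ex]

lemma A20 (a b : ℝ) : Aab 2 F3ex F1ex (fun _ _ => 0) a b = 0 := by
  simp [Aab, tp1, tp3, tpd1, tpd3, F1ex, F3ex]

lemma A21 (a b : ℝ) : Aab 2 F3ex F2ex (fun _ _ => 0) a b = 0 := by
  simp [Aab, tp2, tp3, tpd2, tpd3, F2ex, F3ex]

lemma V10 (a b : ℝ) : Vab 2 F2ex F1ex a b = (b-a)^4 + (b-a)^3 := by
  simp [Vab, tpd1, tpd2]
  ring

lemma V20 (a b : ℝ) : Vab 2 F3ex F1ex a b = (b-a)^4 + 2*(b-a)^3 := by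
  simp [Vab, tpd1, tpd3]
  ring

lemma V21 (a b : ℝ) : Vab 2 F3ex F2ex a b = (b-a)^4 + (b-a)^3 := by
  simp [Vab, tpd2, tpd3]
  ring

lemma half_pos' (n : ℕ) : (0:ℝ) < (1/2)^n := by positivity

lemma d_lt_c {k l : ℕ} (h : k < l) : dSeq k < cSeq l := by
  have h1 : (1/2:ℝ)^l ≤ (1/2)^(k+1) := pow_le_pow_of_le_one (by norm_num) (by norm_num) h
  have h2 := half_pos' k
  simp only [dSeq, cSeq, pow_succ] at *
  nlinarith

lemma c_mono {k l : ℕ} (h : k ≤ l) : cSeq k ≤ cSeq l := by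
  have h1 : (1/2:ℝ)^l ≤ (1/2)^k := pow_le_pow_of_le_one (by norm_num) (by norm_num) h
  simp only [cSeq]; linarith

lemma d_mono {k l : ℕ} (h : k ≤ l) : dSeq k ≤ dSeq l := by
  have h1 : (1/2:ℝ)^l ≤ (1/2)^k := pow_le_pow_of_le_one (by norm_num) (by norm_num) h
  simp only [dSeq]; linarith

lemma d_lt_one (k : ℕ) : dSeq k < 1 := by
  have := half_pos' k; simp only [dSeq]; nlinarith

lemma c_lt_one (k : ℕ) : cSeq k < 1 := by
  have := half_pos' k; simp only [cSeq]; linarith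

lemma c_le_d (k : ℕ) : cSeq k ≤ dSeq k := by
  have := half_pos' k; simp only [cSeq, dSeq]; nlinarith

lemma mem_Kex {t : ℝ} (ht : t ∈ Kex) :
    (∃ n, t ∈ Icc (cSeq (n+1)) (dSeq (n+1))) ∨ t = 1 := by
  rcases (by simpa [Kex] using ht : t = 1 ∨ ∃ n, cSeq (n+1) ≤ t ∧ t ≤ dSeq (n+1)) with h | ⟨n, h1, h2⟩
  · exact Or.inr h
  · exact Or.inl ⟨n, h1, h2⟩

lemma one_mem_Kex : (1:ℝ) ∈ Kex := by simp [Kex]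

lemma fval (n : ℕ) {t : ℝ} (ht : t ∈ Icc (cSeq (n+1)) (dSeq (n+1))) :
    F21ex 0 t = (1/10:ℝ)^(n+1) := by
  have : ∀ m : ℕ, m ≠ n →
      Set.indicator (Icc (cSeq (m+1)) (dSeq (m+1))) (fun _ => ((1:ℝ)/10)^(m+1)) t = 0 := by
    intro m hmn
    apply Set.indicator_of_notMem
    intro hm
    rcases lt_or_gt_of_ne hmn with h | h
    · have := d_lt_c (show m+1 < n+1 by omega)
      have := hm.2; have := ht.1; linarith
    · have := d_lt_c (show n+1 < m+1 by omega)
      have := hm.1; have := ht.2; linarith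
  simp only [F21ex, if_pos rfl]
  rw [tsum_eq_single n this, Set.indicator_of_mem ht]
  simp

lemma fone : F21ex 0 1 = 0 := by
  simp only [F21ex, if_pos rfl]
  have : ∀ n : ℕ,
      Set.indicator (Icc (cSeq (n+1)) (dSeq (n+1))) (fun _ => ((1:ℝ)/10)^(n+1)) 1 = 0 := by
    intro n
    apply Set.indicator_of_notMem
    intro hm
    have := d_lt_one (n+1); have := hm.2; linarith
  rw [tsum_congr this, tsum_zero]
  simp

lemma gapval (n : ℕ) {a b : ℝ} (ha : a ∈ Icc (cSeq (n+1)) (dSeq (n+1)))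
    (hb : b ∈ Kex) (hgt : dSeq (n+1) < b) :
    (1/2:ℝ)^(n+1)/4 ≤ b - a ∧ |F21ex 0 b - F21ex 0 a| ≤ (1/10:ℝ)^(n+1) := by
  have hfa : F21ex 0 a = (1/10:ℝ)^(n+1) := fval n ha
  have hb' : cSeq (n+2) ≤ b ∧ 0 ≤ F21ex 0 b ∧ F21ex 0 b ≤ (1/10:ℝ)^(n+1) := by
    rcases mem_Kex hb with ⟨m, hm⟩ | rfl
    · have hnm : n < m := by
        by_contra h
        have := d_mono (show m+1 ≤ n+1 by omega)
        have := hm.2; linarith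
      refine ⟨le_trans (c_mono (show n+2 ≤ m+1 by omega)) hm.1, ?_, ?_⟩
      · rw [fval m hm]; positivity
      · rw [fval m hm]
        exact pow_le_pow_of_le_one (by norm_num) (by norm_num) (by omega)
    · exact ⟨(c_lt_one (n+2)).le, by rw [fone], by rw [fone]; positivity⟩
  constructor
  · have h1 : cSeq (n+2) - dSeq (n+1) = (1/2:ℝ)^(n+1)/4 := by
      simp only [cSeq, dSeq, pow_succ]; ring
    have := ha.2
    linarith [hb'.1]
  · have hp : (0:ℝ) ≤ (1/10:ℝ)^(n+1) := by positivity
    rw [hfa, abs_sub_le_iff]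
    constructor <;> linarith [hb'.2.1, hb'.2.2]

lemma arith {ε : ℝ} (N n : ℕ) (hN : ((4:ℝ)/5)^N < ε/64) {g D : ℝ}
    (hg1 : (1/2:ℝ)^(n+1)/4 ≤ g) (hg2 : g < (1/2:ℝ)^(N+1)/4)
    (hD : |D| ≤ (1/10:ℝ)^(n+1)) : |D| ≤ ε * g^3 := by
  have hgpos : 0 < g := lt_of_lt_of_le (by positivity) hg1
  have hNn : N + 1 < n + 1 + 1 := by
    have h : (1/2:ℝ)^(n+1) < (1/2)^(N+1) := by linarith
    have := (pow_lt_pow_iff_right_of_lt_one₀ (by norm_num : (0:ℝ) < 1/2)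
      (by norm_num)).mp h
    omega
  have h45 : ((4:ℝ)/5)^(n+1) ≤ (4/5)^N :=
    pow_le_pow_of_le_one (by norm_num) (by norm_num) (by omega)
  have h8 : ((1/8:ℝ))^(n+1) ≤ 64 * g^3 := by
    have h1 : (1/2:ℝ)^(n+1) ≤ 4*g := by linarith
    have h2 : ((1/2:ℝ)^(n+1))^3 ≤ (4*g)^3 :=
      pow_le_pow_left₀ (by positivity) h1 3
    have hpw : ((1/2:ℝ)^(n+1))^3 = ((1/8:ℝ))^(n+1) := by
      rw [← pow_mul, mul_comm, pow_mul]; norm_num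
    calc ((1/8:ℝ))^(n+1) = ((1/2:ℝ)^(n+1))^3 := hpw.symm
      _ ≤ (4*g)^3 := h2
      _ = 64 * g^3 := by ring
  calc |D| ≤ (1/10:ℝ)^(n+1) := hD
    _ = (4/5:ℝ)^(n+1) * (1/8)^(n+1) := by rw [← mul_pow]; norm_num
    _ ≤ (4/5:ℝ)^N * (64 * g^3) :=
        mul_le_mul h45 h8 (by positivity) (by positivity)
    _ ≤ (ε/64) * (64 * g^3) :=
        mul_le_mul_of_nonneg_right hN.le (by positivity)
    _ = ε * g^3 := by ring

lemma master {ε : ℝ} (hε : 0 < ε) : ∃ δ > 0, ∀ a ∈ Kex, ∀ b ∈ Kex,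
    |b - a| < δ → |F21ex 0 b - F21ex 0 a| ≤ ε * |b - a|^3 := by
  obtain ⟨N, hN⟩ := exists_pow_lt_of_lt_one (show (0:ℝ) < ε/64 by linarith)
    (show (4:ℝ)/5 < 1 by norm_num)
  refine ⟨(1/2)^(N+1)/4, by positivity, ?_⟩
  have key : ∀ n : ℕ, ∀ a ∈ Icc (cSeq (n+1)) (dSeq (n+1)), ∀ b ∈ Kex,
      dSeq (n+1) < b → b - a < (1/2:ℝ)^(N+1)/4 →
      |F21ex 0 b - F21ex 0 a| ≤ ε * (b-a)^3 := by
    intro n a ha b hb hgt hlt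
    obtain ⟨hg, hD⟩ := gapval n ha hb hgt
    exact arith N n hN hg hlt hD
  intro a ha b hb hab
  rcases mem_Kex ha with ⟨n, han⟩ | rfl
  · rcases mem_Kex hb with ⟨m, hbm⟩ | rfl
    · rcases lt_trichotomy n m with h | rfl | h
      · have hd : dSeq (n+1) < b := lt_of_lt_of_le (d_lt_c (by omega)) hbm.1
        have hba : 0 < b - a := by linarith [han.2]
        rw [abs_of_pos hba] at *
        exact key n a han b hb hd hab
      · rw [fval n han, fval n hbm]
        simp only [sub_self, abs_zero]
        positivity
      · have hd : dSeq (m+1) < a := lt_of_lt_of_le (d_lt_c (by omega)) han.1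
        have hba : 0 < a - b := by linarith [hbm.2]
        have hab' : a - b < (1/2:ℝ)^(N+1)/4 := by
          rw [abs_sub_comm, abs_of_pos hba] at hab; exact hab
        have := key m b hbm a ha hd hab'
        rw [abs_sub_comm, show |b - a| = a - b from by rw [abs_sub_comm]; exact abs_of_pos hba]
        exact this
    · have hd : dSeq (n+1) < 1 := d_lt_one _
      have hba : 0 < 1 - a := by linarith [han.2]
      rw [abs_of_pos hba] at *
      exact key n a han 1 one_mem_Kex hd hab
  · rcases mem_Kex hb with ⟨m, hbm⟩ | rfl
    · have hd : dSeq (m+1) < 1 := d_lt_one _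
      have hba : 0 < 1 - b := by linarith [hbm.2]
      have hab' : 1 - b < (1/2:ℝ)^(N+1)/4 := by
        rw [abs_sub_comm, abs_of_pos hba] at hab; exact hab
      have := key m b hbm 1 one_mem_Kex hd hab'
      rw [abs_sub_comm, show |b - 1| = 1 - b from by rw [abs_sub_comm]; exact abs_of_pos hba]
      exact this
    · simp only [sub_self, abs_zero]
      positivity

lemma fcont : ContinuousOn (F21ex 0) Kex := by
  rw [Metric.continuousOn_iff]
  intro b hb ε hε
  obtain ⟨δ, hδ, hm⟩ := master (show (0:ℝ) < 1 by norm_num)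
  refine ⟨min δ (min 1 ε), by positivity, ?_⟩
  intro a ha hd
  rw [Real.dist_eq] at hd ⊢
  have h1 : |a - b| < δ := lt_of_lt_of_le hd (min_le_left _ _)
  have h2 : |a - b| < 1 := lt_of_lt_of_le hd (le_trans (min_le_right _ _) (min_le_left _ _))
  have h3 : |a - b| < ε := lt_of_lt_of_le hd (le_trans (min_le_right _ _) (min_le_right _ _))
  have := hm b hb a ha h1
  have habs : (0:ℝ) ≤ |a - b| := abs_nonneg _
  have h4 : |a - b|^3 ≤ |a - b| := by nlinarith [mul_nonneg habs habs]
  calc dist (F21ex 0 a) (F21ex 0 b) = |F21ex 0 a - F21ex 0 b| := Real.dist_eq _ _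
    _ ≤ 1 * |a - b|^3 := this
    _ ≤ |a - b| := by linarith
    _ < ε := h3

-- Whitney fields
lemma F21ex1 : F21ex 1 = fun _ => (0:ℝ) := rfl
lemma F21ex2 : F21ex 2 = fun _ => (0:ℝ) := rfl

lemma wf1 : IsWhitneyField 2 Kex F1ex := by
  constructor
  · intro k hk
    interval_cases k
    · exact (continuous_id).continuousOn
    · exact continuousOn_const
    · exact continuousOn_const
  · intro k hk ε hε
    refine ⟨1, by norm_num, ?_⟩
    intro a ha b hb hab
    interval_cases k <;>
      simp [F1ex, Finset.sum_range_succ, Nat.factorial] <;>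
      first
        | positivity
        | exact le_trans (le_of_eq (abs_eq_zero.mpr (by ring))) (by positivity)

lemma wf2 : IsWhitneyField 2 Kex F2ex := by
  constructor
  · intro k hk; exact continuousOn_const
  · intro k hk ε hε
    refine ⟨1, by norm_num, ?_⟩
    intro a ha b hb hab
    simp [F2ex]
    positivity

lemma wf3 : IsWhitneyField 2 Kex F3ex := by
  constructor
  · intro k hk
    interval_cases k
    · exact (continuous_id.neg).continuousOn
    · exact continuousOn_const
    · exact continuousOn_const
  · intro k hk ε hε
    refine ⟨1, by norm_num, ?_⟩
    intro a ha b hb hab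
    interval_cases k <;>
      simp [F3ex, Finset.sum_range_succ, Nat.factorial] <;>
      first
        | positivity
        | exact le_trans (le_of_eq (abs_eq_zero.mpr (by ring))) (by positivity)

lemma wf0 : IsWhitneyField 2 Kex (fun _ _ => (0:ℝ)) := by
  constructor
  · intro k hk; exact continuousOn_const
  · intro k hk ε hε
    refine ⟨1, by norm_num, ?_⟩
    intro a ha b hb hab
    simp
    positivity

lemma wf21 : IsWhitneyField 2 Kex F21ex := by
  constructor
  · intro k hk
    interval_cases k
    · exact fcont
    · rw [F21ex1]; exact continuousOn_const
    · rw [F21ex2]; exact continuousOn_const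
  · intro k hk ε hε
    interval_cases k
    · obtain ⟨δ, hδ, hm⟩ := master hε
      refine ⟨min δ 1, by positivity, ?_⟩
      intro a ha b hb hab
      have h1 : |b - a| < δ := lt_of_lt_of_le hab (min_le_left _ _)
      have h2 : |b - a| ≤ 1 := le_of_lt (lt_of_lt_of_le hab (min_le_right _ _))
      have h3 := hm a ha b hb h1
      have habs := abs_nonneg (b - a)
      simp only [Finset.sum_range_succ, Finset.sum_range_zero, Nat.sub_zero]
      norm_num [F21ex1, F21ex2]
      calc |F21ex 0 b - F21ex 0 a| ≤ ε * |b - a|^3 := h3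
        _ ≤ ε * |b - a|^2 := by
            nlinarith [mul_nonneg (mul_nonneg hε.le (mul_nonneg habs habs))
              (sub_nonneg.mpr h2)]
        _ = ε * (b - a)^2 := by rw [sq_abs]
    · refine ⟨1, by norm_num, ?_⟩
      intro a ha b hb hab
      simp [F21ex, Finset.sum_range_succ]
      positivity
    · refine ⟨1, by norm_num, ?_⟩
      intro a ha b hb hab
      simp [F21ex, Finset.sum_range_succ]
      positivity

/-- The explicit jets on `K` are Whitney fields of class `C²`, satisfy the `𝒫^k`
compatibility conditions, and satisfy the component-wise `A/V` condition. -/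
theorem stmt6 :
    (∀ i, IsWhitneyField 2 Kex (Fex i)) ∧
    (∀ i j : Fin 3, j < i → IsWhitneyField 2 Kex (Fijex i j)) ∧
    (∀ k : ℕ, 1 ≤ k → k ≤ 2 → ∀ t ∈ Kex, ∀ i j : Fin 3, j < i →
      Fijex i j k t = pScript k (fun l => Fex i l t) (fun l => Fex j l t)) ∧
    (∀ i j : Fin 3, j < i → ∀ ε > 0, ∃ δ > 0, ∀ a ∈ Kex, ∀ b ∈ Kex, a < b → b - a < δ →
      |Aab 2 (Fex i) (Fex j) (Fijex i j) a b| ≤ ε * Vab 2 (Fex i) (Fex j) a b) := by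
  refine ⟨?_, ?_, ?_, ?_⟩
  · intro i
    fin_cases i
    exacts [wf1, wf2, wf3]
  · intro i j hij
    fin_cases i <;> fin_cases j <;>
      first
        | exact absurd hij (by decide)
        | exact wf21
        | exact wf0
  · intro k hk1 hk2 t ht i j hij
    interval_cases k <;> fin_cases i <;> fin_cases j <;>
      first
        | exact absurd hij (by decide)
        | (simp [Fijex, Fex, pScript, F1ex, F2ex, F3ex, F21ex, Finset.sum_range_succ]
           <;> ring)
  · intro i j hij ε hε
    fin_cases i <;> fin_cases j <;> try exact absurd hij (by decide)
    · -- i = 1, j = 0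
      obtain ⟨δ, hδ, hm⟩ := master hε
      refine ⟨δ, hδ, ?_⟩
      intro a ha b hb hlt hab
      have hba : 0 < b - a := by linarith
      have h := hm a ha b hb (by rwa [abs_of_pos hba])
      rw [abs_of_pos hba] at h
      show |Aab 2 F2ex F1ex F21ex a b| ≤ ε * Vab 2 F2ex F1ex a b
      rw [A10, V10]
      nlinarith [pow_pos hba 4, pow_pos hba 3]
    · -- i = 2, j = 0
      refine ⟨1, one_pos, ?_⟩
      intro a ha b hb hlt hab
      have hba : 0 < b - a := by linarith
      show |Aab 2 F3ex F1ex (fun _ _ => 0) a b| ≤ ε * Vab 2 F3ex F1ex a b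
      rw [A20, V20, abs_zero]
      apply mul_nonneg hε.le
      nlinarith [pow_pos hba 4, pow_pos hba 3]
    · -- i = 2, j = 1
      refine ⟨1, one_pos, ?_⟩
      intro a ha b hb hlt hab
      have hba : 0 < b - a := by linarith
      show |Aab 2 F3ex F2ex (fun _ _ => 0) a b| ≤ ε * Vab 2 F3ex F2ex a b
      rw [A21, V21, abs_zero]
      apply mul_nonneg hε.le
      nlinarith [pow_pos hba 4, pow_pos hba 3]

end
end
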